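/- arXiv:1910.12013 — 3 statements merged into one kernel-verified Lean document; each statement's English description precedes it below -/
import Mathlib

section
/- Let $N\ge1$ be an integer, $0<\theta\le 2$, and let $a\ge 0$, $b<N$ satisfy $(1+a)\theta<b$. Let $G(x,t)$ be a nonnegative kernel on $\mathbb{R}^N\times(0,\infty)$ satisfying $G(x,t)\le C_1 t^{-N/\theta}(1+t^{-1/\theta}|x|)^{-N-\theta}$ for all $x,t$. Then there exists a constant $C>0$ depending only on $N,\theta,a,b,C_1$ such that for all $x\in\mathbb{R}^N\setminus\{0\}$ and $t>0$: $\int_0^t\int_{\mathbb{R}^N} G(x-y,t-s)(t-s)^a |y|^{-b}\,dy\,ds \le C|x|^{(1+a)\theta-b}$. -/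
open MeasureTheory Set Real
open scoped ENNReal NNReal

lemma nontrivialE (N : ℕ) (hN : 1 ≤ N) : Nontrivial (EuclideanSpace ℝ (Fin N)) := by
  apply Module.nontrivial_of_finrank_pos (R := ℝ) (M := EuclideanSpace ℝ (Fin N))
  rw [finrank_euclideanSpace_fin]; omega

lemma annulus_bound (N : ℕ) (hN : 1 ≤ N) (s : ℝ) {c : ℝ} (hc : 0 < c) :
    ∫⁻ y in {y : EuclideanSpace ℝ (Fin N) | c ≤ ‖y‖ ∧ ‖y‖ < 2 * c},
      ENNReal.ofReal (‖y‖ ^ s)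
      ≤ ENNReal.ofReal (max 1 (2 ^ s) * 2 ^ (N : ℝ) * c ^ (s + N)) *
        volume (Metric.ball (0 : EuclideanSpace ℝ (Fin N)) 1) := by
  haveI := nontrivialE N hN
  have hA : MeasurableSet {y : EuclideanSpace ℝ (Fin N) | c ≤ ‖y‖ ∧ ‖y‖ < 2 * c} := by
    apply MeasurableSet.inter
    · exact (isClosed_le continuous_const continuous_norm).measurableSet
    · exact (isOpen_lt continuous_norm continuous_const).measurableSet
  have hMnn : (0:ℝ) ≤ max 1 (2 ^ s) := le_trans zero_le_one (le_max_left _ _)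
  have hnn : (0:ℝ) ≤ max 1 (2 ^ s) * c ^ s := mul_nonneg hMnn (rpow_nonneg hc.le _)
  calc ∫⁻ y in {y : EuclideanSpace ℝ (Fin N) | c ≤ ‖y‖ ∧ ‖y‖ < 2 * c},
        ENNReal.ofReal (‖y‖ ^ s)
      ≤ ∫⁻ _ in {y : EuclideanSpace ℝ (Fin N) | c ≤ ‖y‖ ∧ ‖y‖ < 2 * c},
        ENNReal.ofReal (max 1 (2 ^ s) * c ^ s) := by
        apply setLIntegral_mono' hA
        intro y hy
        apply ENNReal.ofReal_le_ofReal
        rcases le_or_gt 0 s with hs | hs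
        · calc ‖y‖ ^ s ≤ (2 * c) ^ s := Real.rpow_le_rpow (norm_nonneg _) hy.2.le hs
            _ = 2 ^ s * c ^ s := Real.mul_rpow (by norm_num) hc.le
            _ ≤ max 1 (2 ^ s) * c ^ s :=
              mul_le_mul_of_nonneg_right (le_max_right _ _) (rpow_nonneg hc.le _)
        · have h1 : ‖y‖ ^ s ≤ c ^ s := Real.rpow_le_rpow_of_nonpos hc hy.1 hs.le
          have h2 : (1:ℝ) ≤ max 1 (2 ^ s) := le_max_left _ _
          nlinarith [rpow_nonneg hc.le s]
    _ = ENNReal.ofReal (max 1 (2 ^ s) * c ^ s) *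
        volume {y : EuclideanSpace ℝ (Fin N) | c ≤ ‖y‖ ∧ ‖y‖ < 2 * c} :=
        setLIntegral_const _ _
    _ ≤ ENNReal.ofReal (max 1 (2 ^ s) * c ^ s) *
        (ENNReal.ofReal ((2 * c) ^ Module.finrank ℝ (EuclideanSpace ℝ (Fin N))) *
          volume (Metric.ball (0 : EuclideanSpace ℝ (Fin N)) 1)) := by
        apply mul_le_mul_right
        rw [← Measure.addHaar_ball (volume) (0 : EuclideanSpace ℝ (Fin N))
          (by positivity : (0:ℝ) ≤ 2 * c)]
        apply measure_mono
        intro y hy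
        exact mem_ball_zero_iff.2 hy.2
    _ = ENNReal.ofReal (max 1 (2 ^ s) * 2 ^ (N : ℝ) * c ^ (s + N)) *
        volume (Metric.ball (0 : EuclideanSpace ℝ (Fin N)) 1) := by
        rw [← mul_assoc, ← ENNReal.ofReal_mul hnn]
        congr 2
        rw [finrank_euclideanSpace_fin]
        have e1 : ((2*c):ℝ) ^ (N:ℕ) = 2 ^ (N:ℝ) * c ^ (N:ℝ) := by
          rw [← Real.rpow_natCast (2*c) N, Real.mul_rpow (by norm_num) hc.le]
        have e2 : c ^ (s + (N:ℝ)) = c ^ s * c ^ (N:ℝ) := Real.rpow_add hc s N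
        rw [e1, e2]
        ring

lemma ball_rpow_bound (N : ℕ) (hN : 1 ≤ N) (s : ℝ) (hs : 0 < s + N) :
    ∃ K : ℝ≥0∞, K ≠ ⊤ ∧ ∀ R : ℝ, 0 < R →
      ∫⁻ y in Metric.ball (0 : EuclideanSpace ℝ (Fin N)) R, ENNReal.ofReal (‖y‖ ^ s)
        ≤ K * ENNReal.ofReal (R ^ (s + N)) := by
  haveI := nontrivialE N hN
  set ρ : ℝ := (1/2 : ℝ) ^ (s + N) with hρdef
  have hρ0 : (0:ℝ) ≤ ρ := rpow_nonneg (by norm_num) _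
  set q : ℝ≥0∞ := ENNReal.ofReal ρ with hqdef
  have hq1 : q < 1 := by
    rw [hqdef]
    exact ENNReal.ofReal_lt_one.2 (Real.rpow_lt_one (by norm_num) (by norm_num) hs)
  have hsub : (1 : ℝ≥0∞) - q ≠ 0 := (tsub_pos_of_lt hq1).ne'
  refine ⟨ENNReal.ofReal (max 1 (2 ^ s) * 2 ^ (N : ℝ)) *
      volume (Metric.ball (0 : EuclideanSpace ℝ (Fin N)) 1) * (q * (1 - q)⁻¹), ?_, ?_⟩
  · exact ENNReal.mul_ne_top (ENNReal.mul_ne_top ENNReal.ofReal_ne_top measure_ball_lt_top.ne)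
      (ENNReal.mul_ne_top ENNReal.ofReal_ne_top (ENNReal.inv_ne_top.2 hsub))
  intro R hR
  have hcover : Metric.ball (0 : EuclideanSpace ℝ (Fin N)) R ⊆
      {(0 : EuclideanSpace ℝ (Fin N))} ∪ ⋃ k : ℕ,
        {y : EuclideanSpace ℝ (Fin N) | R * (1/2:ℝ)^(k+1) ≤ ‖y‖ ∧ ‖y‖ < 2 * (R * (1/2:ℝ)^(k+1))} := by
    intro y hy
    by_cases hy0 : y = 0
    · exact mem_union_left _ (by simp [hy0])
    have hu0 : 0 < ‖y‖ := norm_pos_iff.2 hy0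
    have hyR : ‖y‖ < R := mem_ball_zero_iff.1 hy
    have hex : ∃ n : ℕ, R * (1/2:ℝ)^n ≤ ‖y‖ := by
      obtain ⟨n, hn⟩ := exists_pow_lt_of_lt_one (div_pos hu0 hR) (by norm_num : (1/2:ℝ) < 1)
      exact ⟨n, by rw [lt_div_iff₀ hR] at hn; nlinarith⟩
    have hspec := Nat.find_spec hex
    have hn₀ : Nat.find hex ≠ 0 := by
      intro h
      rw [h, pow_zero, mul_one] at hspec
      exact absurd hspec (not_le.2 hyR)
    obtain ⟨k, hk⟩ : ∃ k, Nat.find hex = k + 1 :=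
      ⟨Nat.find hex - 1, (Nat.succ_pred_eq_of_pos (Nat.pos_of_ne_zero hn₀)).symm⟩
    refine mem_union_right _ (mem_iUnion.2 ⟨k, ?_, ?_⟩)
    · rw [← hk]; exact hspec
    · have hmin := Nat.find_min hex (show k < Nat.find hex by omega)
      push_neg at hmin
      have h2 : 2 * (R * ((1/2:ℝ)^k * (1/2))) = R * (1/2:ℝ)^k := by ring
      rw [pow_succ, h2]
      exact hmin
  calc ∫⁻ y in Metric.ball (0 : EuclideanSpace ℝ (Fin N)) R, ENNReal.ofReal (‖y‖ ^ s)
      ≤ ∫⁻ y in ({(0 : EuclideanSpace ℝ (Fin N))} ∪ ⋃ k : ℕ,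
        {y : EuclideanSpace ℝ (Fin N) | R * (1/2:ℝ)^(k+1) ≤ ‖y‖ ∧ ‖y‖ < 2 * (R * (1/2:ℝ)^(k+1))}),
          ENNReal.ofReal (‖y‖ ^ s) := lintegral_mono_set hcover
    _ ≤ (∫⁻ y in {(0 : EuclideanSpace ℝ (Fin N))}, ENNReal.ofReal (‖y‖ ^ s)) +
        ∫⁻ y in (⋃ k : ℕ,
        {y : EuclideanSpace ℝ (Fin N) | R * (1/2:ℝ)^(k+1) ≤ ‖y‖ ∧ ‖y‖ < 2 * (R * (1/2:ℝ)^(k+1))}),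
          ENNReal.ofReal (‖y‖ ^ s) := lintegral_union_le _ _ _
    _ ≤ 0 + ∑' k : ℕ, ∫⁻ y in
        {y : EuclideanSpace ℝ (Fin N) | R * (1/2:ℝ)^(k+1) ≤ ‖y‖ ∧ ‖y‖ < 2 * (R * (1/2:ℝ)^(k+1))},
          ENNReal.ofReal (‖y‖ ^ s) := by
        apply add_le_add
        · exact le_of_eq (setLIntegral_measure_zero _ _ (measure_singleton _))
        · exact lintegral_iUnion_le _ _
    _ ≤ 0 + ∑' k : ℕ, ENNReal.ofReal (max 1 (2 ^ s) * 2 ^ (N : ℝ) * (R * (1/2:ℝ)^(k+1)) ^ (s + N)) *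
          volume (Metric.ball (0 : EuclideanSpace ℝ (Fin N)) 1) := by
        apply add_le_add_right
        exact ENNReal.tsum_le_tsum fun k => annulus_bound N hN s (by positivity)
    _ = ENNReal.ofReal (max 1 (2 ^ s) * 2 ^ (N : ℝ)) *
          volume (Metric.ball (0 : EuclideanSpace ℝ (Fin N)) 1) * (q * (1 - q)⁻¹) *
          ENNReal.ofReal (R ^ (s + N)) := by
        rw [zero_add]
        have hMnn : (0:ℝ) ≤ max 1 (2 ^ s) * 2 ^ (N:ℝ) :=
          mul_nonneg (le_trans zero_le_one (le_max_left _ _)) (rpow_nonneg (by norm_num) _)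
        have hterm : ∀ k : ℕ,
            ENNReal.ofReal (max 1 (2 ^ s) * 2 ^ (N : ℝ) * (R * (1/2:ℝ)^(k+1)) ^ (s + N)) *
              volume (Metric.ball (0 : EuclideanSpace ℝ (Fin N)) 1)
            = (ENNReal.ofReal (max 1 (2 ^ s) * 2 ^ (N : ℝ)) *
                volume (Metric.ball (0 : EuclideanSpace ℝ (Fin N)) 1) *
                ENNReal.ofReal (R ^ (s + N)) * q) * q ^ k := by
          intro k
          have h1 : (R * (1/2:ℝ)^(k+1)) ^ (s + N) = R ^ (s + N) * ρ ^ (k+1) := by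
            rw [Real.mul_rpow hR.le (pow_nonneg (by norm_num) _),
              ← Real.rpow_natCast ((1/2:ℝ)) (k+1), ← Real.rpow_mul (by norm_num),
              mul_comm (((k+1 : ℕ)):ℝ) (s + N), Real.rpow_mul (by norm_num),
              Real.rpow_natCast]
          rw [h1, ENNReal.ofReal_mul hMnn, ENNReal.ofReal_mul (rpow_nonneg hR.le _),
            ENNReal.ofReal_pow hρ0, ← hqdef, pow_succ]
          ring
        rw [tsum_congr hterm, ENNReal.tsum_mul_left, ENNReal.tsum_geometric]
        ring
    _ = ENNReal.ofReal (max 1 (2 ^ s) * 2 ^ (N : ℝ)) *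
          volume (Metric.ball (0 : EuclideanSpace ℝ (Fin N)) 1) * (q * (1 - q)⁻¹) *
          ENNReal.ofReal (R ^ (s + N)) := rfl

lemma compl_ball_rpow_bound (N : ℕ) (hN : 1 ≤ N) (s : ℝ) (hs : s + N < 0) :
    ∃ K : ℝ≥0∞, K ≠ ⊤ ∧ ∀ R : ℝ, 0 < R →
      ∫⁻ y in (Metric.ball (0 : EuclideanSpace ℝ (Fin N)) R)ᶜ, ENNReal.ofReal (‖y‖ ^ s)
        ≤ K * ENNReal.ofReal (R ^ (s + N)) := by
  haveI := nontrivialE N hN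
  set ρ : ℝ := (2 : ℝ) ^ (s + N) with hρdef
  have hρ0 : (0:ℝ) ≤ ρ := rpow_nonneg (by norm_num) _
  set q : ℝ≥0∞ := ENNReal.ofReal ρ with hqdef
  have hq1 : q < 1 := by
    rw [hqdef]
    exact ENNReal.ofReal_lt_one.2 (Real.rpow_lt_one_of_one_lt_of_neg one_lt_two hs)
  have hsub : (1 : ℝ≥0∞) - q ≠ 0 := (tsub_pos_of_lt hq1).ne'
  refine ⟨ENNReal.ofReal (max 1 (2 ^ s) * 2 ^ (N : ℝ)) *
      volume (Metric.ball (0 : EuclideanSpace ℝ (Fin N)) 1) * (1 - q)⁻¹, ?_, ?_⟩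
  · exact ENNReal.mul_ne_top (ENNReal.mul_ne_top ENNReal.ofReal_ne_top measure_ball_lt_top.ne)
      (ENNReal.inv_ne_top.2 hsub)
  intro R hR
  have hcover : (Metric.ball (0 : EuclideanSpace ℝ (Fin N)) R)ᶜ ⊆ ⋃ k : ℕ,
        {y : EuclideanSpace ℝ (Fin N) | R * (2:ℝ)^k ≤ ‖y‖ ∧ ‖y‖ < 2 * (R * (2:ℝ)^k)} := by
    intro y hy
    have hyR : R ≤ ‖y‖ := by
      have := (mem_compl_iff _ _).1 hy
      rw [mem_ball_zero_iff] at this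
      linarith [not_lt.1 this]
    have hex : ∃ n : ℕ, ‖y‖ < R * (2:ℝ)^n := by
      obtain ⟨n, hn⟩ := pow_unbounded_of_one_lt (‖y‖ / R) (one_lt_two (α := ℝ))
      exact ⟨n, by rw [div_lt_iff₀ hR] at hn; nlinarith⟩
    have hspec := Nat.find_spec hex
    have hn₀ : Nat.find hex ≠ 0 := by
      intro h
      rw [h, pow_zero, mul_one] at hspec
      exact absurd hspec (not_lt.2 hyR)
    obtain ⟨k, hk⟩ : ∃ k, Nat.find hex = k + 1 :=
      ⟨Nat.find hex - 1, (Nat.succ_pred_eq_of_pos (Nat.pos_of_ne_zero hn₀)).symm⟩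
    refine mem_iUnion.2 ⟨k, ?_, ?_⟩
    · have hmin := Nat.find_min hex (show k < Nat.find hex by omega)
      push_neg at hmin
      exact hmin
    · have h2 : 2 * (R * (2:ℝ)^k) = R * ((2:ℝ)^k * 2) := by ring
      rw [h2, ← pow_succ, ← hk]
      exact hspec
  calc ∫⁻ y in (Metric.ball (0 : EuclideanSpace ℝ (Fin N)) R)ᶜ, ENNReal.ofReal (‖y‖ ^ s)
      ≤ ∫⁻ y in (⋃ k : ℕ,
        {y : EuclideanSpace ℝ (Fin N) | R * (2:ℝ)^k ≤ ‖y‖ ∧ ‖y‖ < 2 * (R * (2:ℝ)^k)}),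
          ENNReal.ofReal (‖y‖ ^ s) := lintegral_mono_set hcover
    _ ≤ ∑' k : ℕ, ∫⁻ y in
        {y : EuclideanSpace ℝ (Fin N) | R * (2:ℝ)^k ≤ ‖y‖ ∧ ‖y‖ < 2 * (R * (2:ℝ)^k)},
          ENNReal.ofReal (‖y‖ ^ s) := lintegral_iUnion_le _ _
    _ ≤ ∑' k : ℕ, ENNReal.ofReal (max 1 (2 ^ s) * 2 ^ (N : ℝ) * (R * (2:ℝ)^k) ^ (s + N)) *
          volume (Metric.ball (0 : EuclideanSpace ℝ (Fin N)) 1) :=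
        ENNReal.tsum_le_tsum fun k => annulus_bound N hN s (by positivity)
    _ = ENNReal.ofReal (max 1 (2 ^ s) * 2 ^ (N : ℝ)) *
          volume (Metric.ball (0 : EuclideanSpace ℝ (Fin N)) 1) * (1 - q)⁻¹ *
          ENNReal.ofReal (R ^ (s + N)) := by
        have hMnn : (0:ℝ) ≤ max 1 (2 ^ s) * 2 ^ (N:ℝ) :=
          mul_nonneg (le_trans zero_le_one (le_max_left _ _)) (rpow_nonneg (by norm_num) _)
        have hterm : ∀ k : ℕ,
            ENNReal.ofReal (max 1 (2 ^ s) * 2 ^ (N : ℝ) * (R * (2:ℝ)^k) ^ (s + N)) *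
              volume (Metric.ball (0 : EuclideanSpace ℝ (Fin N)) 1)
            = (ENNReal.ofReal (max 1 (2 ^ s) * 2 ^ (N : ℝ)) *
                volume (Metric.ball (0 : EuclideanSpace ℝ (Fin N)) 1) *
                ENNReal.ofReal (R ^ (s + N))) * q ^ k := by
          intro k
          have h1 : (R * (2:ℝ)^k) ^ (s + N) = R ^ (s + N) * ρ ^ k := by
            rw [Real.mul_rpow hR.le (pow_nonneg (by norm_num) _),
              ← Real.rpow_natCast ((2:ℝ)) k, ← Real.rpow_mul (by norm_num),
              mul_comm ((k : ℕ):ℝ) (s + N), Real.rpow_mul (by norm_num),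
              Real.rpow_natCast]
          rw [h1, ENNReal.ofReal_mul hMnn, ENNReal.ofReal_mul (rpow_nonneg hR.le _),
            ENNReal.ofReal_pow hρ0, ← hqdef]
          ring
        rw [tsum_congr hterm, ENNReal.tsum_mul_left, ENNReal.tsum_geometric]
        ring

lemma lintegral_shift (N : ℕ) (x : EuclideanSpace ℝ (Fin N))
    (f : EuclideanSpace ℝ (Fin N) → ℝ≥0∞) (s : Set (EuclideanSpace ℝ (Fin N))) :
    ∫⁻ y in (fun y => x - y) ⁻¹' s, f (x - y) = ∫⁻ z in s, f z :=
  (Measure.measurePreserving_sub_left volume x).setLIntegral_comp_preimage_emb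
    (MeasurableEquiv.subLeft x).measurableEmbedding f s

lemma riesz_bound (N : ℕ) (hN : 1 ≤ N) (α b : ℝ) (hα : 0 < α) (hαb : α < b) (hbN : b < N) :
    ∃ K : ℝ≥0∞, K ≠ ⊤ ∧ ∀ x : EuclideanSpace ℝ (Fin N), x ≠ 0 →
      ∫⁻ y, ENNReal.ofReal (‖x - y‖ ^ (α - N) * ‖y‖ ^ (-b))
        ≤ K * ENNReal.ofReal (‖x‖ ^ (α - b)) := by
  obtain ⟨K₁, hK₁top, hK₁⟩ := ball_rpow_bound N hN (-b) (by push_cast; linarith)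
  obtain ⟨K₂, hK₂top, hK₂⟩ := ball_rpow_bound N hN (α - N) (by push_cast; linarith)
  obtain ⟨K₃, hK₃top, hK₃⟩ := compl_ball_rpow_bound N hN (α - N - b) (by push_cast; linarith)
  refine ⟨(K₁ + K₂ + ENNReal.ofReal ((4:ℝ) ^ ((N:ℝ) - α)) * K₃) *
      ENNReal.ofReal ((1/2 : ℝ) ^ (α - b)), ?_, ?_⟩
  · exact ENNReal.mul_ne_top
      (by
        apply ENNReal.add_ne_top.2
        exact ⟨ENNReal.add_ne_top.2 ⟨hK₁top, hK₂top⟩,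
          ENNReal.mul_ne_top ENNReal.ofReal_ne_top hK₃top⟩)
      ENNReal.ofReal_ne_top
  intro x hx
  have hρ : 0 < ‖x‖ := norm_pos_iff.2 hx
  set r : ℝ := ‖x‖ / 2 with hrdef
  have hr : 0 < r := by positivity
  set r1 : Set (EuclideanSpace ℝ (Fin N)) := Metric.ball 0 r with hr1def
  set r2 : Set (EuclideanSpace ℝ (Fin N)) := Metric.ball x r with hr2def
  -- piece 1
  have hp1 : ∫⁻ y in r1, ENNReal.ofReal (‖x - y‖ ^ (α - N) * ‖y‖ ^ (-b))
      ≤ K₁ * ENNReal.ofReal (r ^ (α - b)) := by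
    calc ∫⁻ y in r1, ENNReal.ofReal (‖x - y‖ ^ (α - N) * ‖y‖ ^ (-b))
        ≤ ∫⁻ y in r1, ENNReal.ofReal (r ^ (α - N)) * ENNReal.ofReal (‖y‖ ^ (-b)) := by
          apply setLIntegral_mono' measurableSet_ball
          intro y hy
          rw [← ENNReal.ofReal_mul (rpow_nonneg hr.le _)]
          apply ENNReal.ofReal_le_ofReal
          apply mul_le_mul_of_nonneg_right _ (rpow_nonneg (norm_nonneg _) _)
          apply Real.rpow_le_rpow_of_nonpos hr _ (by push_cast; linarith)
          have h1 : ‖y‖ < r := mem_ball_zero_iff.1 hy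
          have h2 : ‖x‖ - ‖y‖ ≤ ‖x - y‖ := norm_sub_norm_le x y
          rw [hrdef] at h1 ⊢
          linarith
      _ = ENNReal.ofReal (r ^ (α - N)) * ∫⁻ y in r1, ENNReal.ofReal (‖y‖ ^ (-b)) :=
          lintegral_const_mul' _ _ ENNReal.ofReal_ne_top
      _ ≤ ENNReal.ofReal (r ^ (α - N)) * (K₁ * ENNReal.ofReal (r ^ (-b + N))) :=
          mul_le_mul_right (hK₁ r hr) _
      _ = K₁ * ENNReal.ofReal (r ^ (α - b)) := by
          rw [← mul_assoc, mul_comm (ENNReal.ofReal (r ^ (α - N))) K₁, mul_assoc]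
          congr 1
          rw [← ENNReal.ofReal_mul (rpow_nonneg hr.le _), ← Real.rpow_add hr]
          congr 1
          ring
  -- piece 2
  have hp2 : ∫⁻ y in r2, ENNReal.ofReal (‖x - y‖ ^ (α - N) * ‖y‖ ^ (-b))
      ≤ K₂ * ENNReal.ofReal (r ^ (α - b)) := by
    have hpre : (fun y : EuclideanSpace ℝ (Fin N) => x - y) ⁻¹' (Metric.ball 0 r) = r2 := by
      ext y
      simp [hr2def, Metric.mem_ball, dist_eq_norm, norm_sub_rev x y]
    calc ∫⁻ y in r2, ENNReal.ofReal (‖x - y‖ ^ (α - N) * ‖y‖ ^ (-b))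
        ≤ ∫⁻ y in r2, ENNReal.ofReal (‖x - y‖ ^ (α - N)) * ENNReal.ofReal (r ^ (-b)) := by
          apply setLIntegral_mono' measurableSet_ball
          intro y hy
          rw [← ENNReal.ofReal_mul (rpow_nonneg (norm_nonneg _) _)]
          apply ENNReal.ofReal_le_ofReal
          apply mul_le_mul_of_nonneg_left _ (rpow_nonneg (norm_nonneg _) _)
          apply Real.rpow_le_rpow_of_nonpos hr _ (by linarith)
          have h1 : ‖x - y‖ < r := by
            have := Metric.mem_ball.1 hy
            rwa [dist_eq_norm, norm_sub_rev] at this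
          have h2 : ‖x‖ - ‖x - y‖ ≤ ‖y‖ := by
            have := norm_sub_norm_le x (x - y)
            simpa using this
          rw [hrdef] at h1 ⊢
          linarith
      _ = (∫⁻ y in r2, ENNReal.ofReal (‖x - y‖ ^ (α - N))) * ENNReal.ofReal (r ^ (-b)) :=
          lintegral_mul_const' _ _ ENNReal.ofReal_ne_top
      _ = (∫⁻ z in Metric.ball (0 : EuclideanSpace ℝ (Fin N)) r,
            ENNReal.ofReal (‖z‖ ^ (α - N))) * ENNReal.ofReal (r ^ (-b)) := by
          rw [← hpre]
          congr 1
          exact lintegral_shift N x (fun z => ENNReal.ofReal (‖z‖ ^ (α - N))) (Metric.ball 0 r)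
      _ ≤ (K₂ * ENNReal.ofReal (r ^ (α - N + N))) * ENNReal.ofReal (r ^ (-b)) :=
          mul_le_mul_left (hK₂ r hr) _
      _ = K₂ * ENNReal.ofReal (r ^ (α - b)) := by
          rw [mul_assoc]
          congr 1
          rw [← ENNReal.ofReal_mul (rpow_nonneg hr.le _), ← Real.rpow_add hr]
          congr 1
          ring
  -- piece 3
  have hp3 : ∫⁻ y in (r1 ∪ r2)ᶜ, ENNReal.ofReal (‖x - y‖ ^ (α - N) * ‖y‖ ^ (-b))
      ≤ ENNReal.ofReal ((4:ℝ) ^ ((N:ℝ) - α)) * K₃ * ENNReal.ofReal (r ^ (α - b)) := by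
    have hmeas : MeasurableSet ((r1 ∪ r2)ᶜ) :=
      (measurableSet_ball.union measurableSet_ball).compl
    calc ∫⁻ y in (r1 ∪ r2)ᶜ, ENNReal.ofReal (‖x - y‖ ^ (α - N) * ‖y‖ ^ (-b))
        ≤ ∫⁻ y in (r1 ∪ r2)ᶜ,
            ENNReal.ofReal ((4:ℝ) ^ ((N:ℝ) - α)) * ENNReal.ofReal (‖y‖ ^ (α - N - b)) := by
          apply setLIntegral_mono' hmeas
          intro y hy
          rw [mem_compl_iff, mem_union] at hy
          push_neg at hy
          have hy1 : r ≤ ‖y‖ := by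
            have := hy.1
            rw [hr1def, Metric.mem_ball, dist_zero_right] at this
            linarith [not_lt.1 this]
          have hy2 : r ≤ ‖x - y‖ := by
            have := hy.2
            rw [hr2def, Metric.mem_ball, dist_eq_norm] at this
            have h' := not_lt.1 this
            rwa [norm_sub_rev] at h'
          have hy0 : 0 < ‖y‖ := lt_of_lt_of_le hr hy1
          have hkey : ‖y‖ / 4 ≤ ‖x - y‖ := by
            rcases le_or_gt ‖y‖ (4 * r) with h | h
            · linarith
            · have h2 : ‖y‖ - ‖x‖ ≤ ‖x - y‖ := by
                have := norm_sub_norm_le y x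
                rwa [norm_sub_rev] at this
              rw [hrdef] at h
              linarith
          rw [← ENNReal.ofReal_mul (rpow_nonneg (by norm_num) _)]
          apply ENNReal.ofReal_le_ofReal
          have hstep : ‖x - y‖ ^ (α - N) ≤ (‖y‖ / 4) ^ (α - N) :=
            Real.rpow_le_rpow_of_nonpos (by positivity) hkey (by push_cast; linarith)
          have hdiv : (‖y‖ / 4) ^ (α - N) = (4:ℝ) ^ ((N:ℝ) - α) * ‖y‖ ^ (α - N) := by
            rw [Real.div_rpow (norm_nonneg _) (by norm_num)]
            rw [show ((N:ℝ) - α) = -(α - N) by ring, Real.rpow_neg (by norm_num)]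
            field_simp
          calc ‖x - y‖ ^ (α - N) * ‖y‖ ^ (-b)
              ≤ (‖y‖ / 4) ^ (α - N) * ‖y‖ ^ (-b) :=
                mul_le_mul_of_nonneg_right hstep (rpow_nonneg (norm_nonneg _) _)
            _ = (4:ℝ) ^ ((N:ℝ) - α) * ‖y‖ ^ (α - N - b) := by
                rw [hdiv, mul_assoc, ← Real.rpow_add hy0]
                congr 2
      _ ≤ ∫⁻ y in r1ᶜ,
            ENNReal.ofReal ((4:ℝ) ^ ((N:ℝ) - α)) * ENNReal.ofReal (‖y‖ ^ (α - N - b)) :=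
          lintegral_mono_set (compl_subset_compl.2 subset_union_left)
      _ = ENNReal.ofReal ((4:ℝ) ^ ((N:ℝ) - α)) *
            ∫⁻ y in (Metric.ball (0 : EuclideanSpace ℝ (Fin N)) r)ᶜ,
              ENNReal.ofReal (‖y‖ ^ (α - N - b)) :=
          lintegral_const_mul' _ _ ENNReal.ofReal_ne_top
      _ ≤ ENNReal.ofReal ((4:ℝ) ^ ((N:ℝ) - α)) * (K₃ * ENNReal.ofReal (r ^ (α - N - b + N))) :=
          mul_le_mul_right (hK₃ r hr) _
      _ = ENNReal.ofReal ((4:ℝ) ^ ((N:ℝ) - α)) * K₃ * ENNReal.ofReal (r ^ (α - b)) := by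
          rw [show (α - (N:ℝ) - b + N) = α - b by ring, mul_assoc]
  -- combine
  have hsplit : ∫⁻ y, ENNReal.ofReal (‖x - y‖ ^ (α - N) * ‖y‖ ^ (-b))
      ≤ (∫⁻ y in r1, ENNReal.ofReal (‖x - y‖ ^ (α - N) * ‖y‖ ^ (-b))) +
        (∫⁻ y in r2, ENNReal.ofReal (‖x - y‖ ^ (α - N) * ‖y‖ ^ (-b))) +
        ∫⁻ y in (r1 ∪ r2)ᶜ, ENNReal.ofReal (‖x - y‖ ^ (α - N) * ‖y‖ ^ (-b)) := by
    calc ∫⁻ y, ENNReal.ofReal (‖x - y‖ ^ (α - N) * ‖y‖ ^ (-b))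
        = ∫⁻ y in (r1 ∪ r2) ∪ (r1 ∪ r2)ᶜ, ENNReal.ofReal (‖x - y‖ ^ (α - N) * ‖y‖ ^ (-b)) := by
          rw [union_compl_self, setLIntegral_univ]
      _ ≤ (∫⁻ y in r1 ∪ r2, ENNReal.ofReal (‖x - y‖ ^ (α - N) * ‖y‖ ^ (-b))) +
          ∫⁻ y in (r1 ∪ r2)ᶜ, ENNReal.ofReal (‖x - y‖ ^ (α - N) * ‖y‖ ^ (-b)) :=
          lintegral_union_le _ _ _
      _ ≤ _ := by
          apply add_le_add_left
          exact lintegral_union_le _ _ _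
  have hhalf : ENNReal.ofReal (r ^ (α - b)) =
      ENNReal.ofReal ((1/2 : ℝ) ^ (α - b)) * ENNReal.ofReal (‖x‖ ^ (α - b)) := by
    rw [← ENNReal.ofReal_mul (rpow_nonneg (by norm_num) _)]
    congr 1
    rw [hrdef, show ‖x‖ / 2 = (1/2 : ℝ) * ‖x‖ by ring,
      Real.mul_rpow (by norm_num) (norm_nonneg _)]
  calc ∫⁻ y, ENNReal.ofReal (‖x - y‖ ^ (α - N) * ‖y‖ ^ (-b))
      ≤ (∫⁻ y in r1, ENNReal.ofReal (‖x - y‖ ^ (α - N) * ‖y‖ ^ (-b))) +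
        (∫⁻ y in r2, ENNReal.ofReal (‖x - y‖ ^ (α - N) * ‖y‖ ^ (-b))) +
        ∫⁻ y in (r1 ∪ r2)ᶜ, ENNReal.ofReal (‖x - y‖ ^ (α - N) * ‖y‖ ^ (-b)) := hsplit
    _ ≤ K₁ * ENNReal.ofReal (r ^ (α - b)) + K₂ * ENNReal.ofReal (r ^ (α - b)) +
        ENNReal.ofReal ((4:ℝ) ^ ((N:ℝ) - α)) * K₃ * ENNReal.ofReal (r ^ (α - b)) :=
        add_le_add (add_le_add hp1 hp2) hp3
    _ = (K₁ + K₂ + ENNReal.ofReal ((4:ℝ) ^ ((N:ℝ) - α)) * K₃) * ENNReal.ofReal (r ^ (α - b)) := by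
        ring
    _ = (K₁ + K₂ + ENNReal.ofReal ((4:ℝ) ^ ((N:ℝ) - α)) * K₃) *
        ENNReal.ofReal ((1/2 : ℝ) ^ (α - b)) * ENNReal.ofReal (‖x‖ ^ (α - b)) := by
        rw [hhalf]; ring

lemma kernel_min_bound (n θ : ℝ) (hn : 0 ≤ n) (hθ : 0 < θ) {τ r : ℝ} (hτ : 0 < τ) (hr : 0 < r) :
    τ ^ (-n / θ) * (1 + τ ^ (-1 / θ) * r) ^ (-n - θ) ≤ min (τ ^ (-n / θ)) (τ * r ^ (-n - θ)) := by
  have hu : 0 < τ ^ (-1 / θ) * r := mul_pos (Real.rpow_pos_of_pos hτ _) hr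
  have hexp : -n - θ ≤ 0 := by linarith
  apply le_min
  · calc τ ^ (-n / θ) * (1 + τ ^ (-1 / θ) * r) ^ (-n - θ)
        ≤ τ ^ (-n / θ) * 1 := by
          apply mul_le_mul_of_nonneg_left _ (rpow_nonneg hτ.le _)
          exact Real.rpow_le_one_of_one_le_of_nonpos (by linarith) hexp
      _ = τ ^ (-n / θ) := mul_one _
  · calc τ ^ (-n / θ) * (1 + τ ^ (-1 / θ) * r) ^ (-n - θ)
        ≤ τ ^ (-n / θ) * (τ ^ (-1 / θ) * r) ^ (-n - θ) := by
          apply mul_le_mul_of_nonneg_left _ (rpow_nonneg hτ.le _)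
          exact Real.rpow_le_rpow_of_nonpos hu (by linarith) hexp
      _ = τ * r ^ (-n - θ) := by
          have he : -n / θ + -1 / θ * (-n - θ) = 1 := by field_simp; ring
          rw [Real.mul_rpow (rpow_nonneg hτ.le _) hr.le, ← Real.rpow_mul hτ.le,
            ← mul_assoc, ← Real.rpow_add hτ, he, Real.rpow_one]

lemma time_bound (n θ a C₁ : ℝ) (hθ : 0 < θ) (ha : 0 ≤ a) (hn : (1 + a) * θ < n)
    (hC₁ : 0 ≤ C₁) {r : ℝ} (hr : 0 < r) :
    ∫⁻ τ in Ioi (0:ℝ), ENNReal.ofReal (C₁ * min (τ ^ (-n / θ)) (τ * r ^ (-n - θ)) * τ ^ a)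
      ≤ ENNReal.ofReal ((C₁ * (1 / (2 + a) + 1 / (n / θ - a - 1))) * r ^ ((1 + a) * θ - n)) := by
  have hR : 0 < r ^ θ := Real.rpow_pos_of_pos hr θ
  have hden : 0 < n / θ - a - 1 := by
    have h1 : a + 1 < n / θ := (lt_div_iff₀ hθ).2 (by nlinarith)
    linarith
  have hsplit : Ioc (0:ℝ) (r ^ θ) ∪ Ioi (r ^ θ) = Ioi (0:ℝ) := Ioc_union_Ioi_eq_Ioi hR.le
  rw [← hsplit]
  refine le_trans (lintegral_union_le _ _ _) ?_
  have hp1 : ∫⁻ τ in Ioc (0:ℝ) (r ^ θ),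
      ENNReal.ofReal (C₁ * min (τ ^ (-n / θ)) (τ * r ^ (-n - θ)) * τ ^ a)
      ≤ ENNReal.ofReal (C₁ / (2 + a) * r ^ ((1 + a) * θ - n)) := by
    calc ∫⁻ τ in Ioc (0:ℝ) (r ^ θ),
        ENNReal.ofReal (C₁ * min (τ ^ (-n / θ)) (τ * r ^ (-n - θ)) * τ ^ a)
        ≤ ∫⁻ τ in Ioc (0:ℝ) (r ^ θ),
            ENNReal.ofReal (C₁ * r ^ (-n - θ)) * ENNReal.ofReal (τ ^ (1 + a)) := by
          apply setLIntegral_mono' measurableSet_Ioc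
          intro τ hτ
          rw [← ENNReal.ofReal_mul (by positivity)]
          apply ENNReal.ofReal_le_ofReal
          have h1 : C₁ * min (τ ^ (-n / θ)) (τ * r ^ (-n - θ)) * τ ^ a
              ≤ C₁ * (τ * r ^ (-n - θ)) * τ ^ a := by
            apply mul_le_mul_of_nonneg_right _ (rpow_nonneg hτ.1.le _)
            exact mul_le_mul_of_nonneg_left (min_le_right _ _) hC₁
          refine h1.trans (le_of_eq ?_)
          rw [Real.rpow_add hτ.1, Real.rpow_one]
          ring
      _ = ENNReal.ofReal (C₁ * r ^ (-n - θ)) *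
            ∫⁻ τ in Ioc (0:ℝ) (r ^ θ), ENNReal.ofReal (τ ^ (1 + a)) :=
          lintegral_const_mul' _ _ ENNReal.ofReal_ne_top
      _ = ENNReal.ofReal (C₁ * r ^ (-n - θ)) *
            ENNReal.ofReal ((r ^ θ) ^ (2 + a) / (2 + a)) := by
          congr 1
          have hInt : IntegrableOn (fun τ : ℝ => τ ^ (1 + a)) (Ioc 0 (r ^ θ)) := by
            have := intervalIntegral.intervalIntegrable_rpow'
              (a := 0) (b := r ^ θ) (show (-1:ℝ) < 1 + a by linarith)
            rwa [intervalIntegrable_iff_integrableOn_Ioc_of_le hR.le] at this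
          have hnn : 0 ≤ᵐ[volume.restrict (Ioc (0:ℝ) (r ^ θ))] fun τ : ℝ => τ ^ (1 + a) :=
            (ae_restrict_iff' measurableSet_Ioc).2
              (ae_of_all _ fun τ hτ => rpow_nonneg hτ.1.le _)
          rw [← ofReal_integral_eq_lintegral_ofReal hInt hnn]
          congr 1
          rw [← intervalIntegral.integral_of_le hR.le,
            integral_rpow (Or.inl (show (-1:ℝ) < 1 + a by linarith))]
          rw [Real.zero_rpow (show (1:ℝ) + a + 1 ≠ 0 by linarith), sub_zero,
            show (1:ℝ) + a + 1 = 2 + a by ring]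
      _ = ENNReal.ofReal (C₁ / (2 + a) * r ^ ((1 + a) * θ - n)) := by
          rw [← ENNReal.ofReal_mul (by positivity)]
          congr 1
          rw [← Real.rpow_mul hr.le]
          rw [show C₁ * r ^ (-n - θ) * (r ^ (θ * (2 + a)) / (2 + a))
              = C₁ / (2 + a) * (r ^ (-n - θ) * r ^ (θ * (2 + a))) by ring,
            ← Real.rpow_add hr, show -n - θ + θ * (2 + a) = (1 + a) * θ - n by ring]
  have hp2 : ∫⁻ τ in Ioi (r ^ θ),
      ENNReal.ofReal (C₁ * min (τ ^ (-n / θ)) (τ * r ^ (-n - θ)) * τ ^ a)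
      ≤ ENNReal.ofReal (C₁ / (n / θ - a - 1) * r ^ ((1 + a) * θ - n)) := by
    have hq : a - n / θ < -1 := by
      have h1 : a + 1 < n / θ := (lt_div_iff₀ hθ).2 (by nlinarith)
      linarith
    calc ∫⁻ τ in Ioi (r ^ θ),
        ENNReal.ofReal (C₁ * min (τ ^ (-n / θ)) (τ * r ^ (-n - θ)) * τ ^ a)
        ≤ ∫⁻ τ in Ioi (r ^ θ), ENNReal.ofReal C₁ * ENNReal.ofReal (τ ^ (a - n / θ)) := by
          apply setLIntegral_mono' measurableSet_Ioi
          intro τ hτ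
          have hτ0 : 0 < τ := lt_trans hR hτ
          rw [← ENNReal.ofReal_mul hC₁]
          apply ENNReal.ofReal_le_ofReal
          have h1 : C₁ * min (τ ^ (-n / θ)) (τ * r ^ (-n - θ)) * τ ^ a
              ≤ C₁ * τ ^ (-n / θ) * τ ^ a := by
            apply mul_le_mul_of_nonneg_right _ (rpow_nonneg hτ0.le _)
            exact mul_le_mul_of_nonneg_left (min_le_left _ _) hC₁
          refine h1.trans (le_of_eq ?_)
          rw [show a - n / θ = -n / θ + a by ring, Real.rpow_add hτ0]
          ring
      _ = ENNReal.ofReal C₁ * ∫⁻ τ in Ioi (r ^ θ), ENNReal.ofReal (τ ^ (a - n / θ)) :=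
          lintegral_const_mul' _ _ ENNReal.ofReal_ne_top
      _ = ENNReal.ofReal C₁ * ENNReal.ofReal (-(r ^ θ) ^ (a - n / θ + 1) / (a - n / θ + 1)) := by
          congr 1
          have hInt : IntegrableOn (fun τ : ℝ => τ ^ (a - n / θ)) (Ioi (r ^ θ)) :=
            integrableOn_Ioi_rpow_of_lt hq hR
          have hnn : 0 ≤ᵐ[volume.restrict (Ioi (r ^ θ))] fun τ : ℝ => τ ^ (a - n / θ) :=
            (ae_restrict_iff' measurableSet_Ioi).2
              (ae_of_all _ fun τ hτ => rpow_nonneg (lt_trans hR hτ).le _)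
          rw [← ofReal_integral_eq_lintegral_ofReal hInt hnn]
          congr 1
          exact integral_Ioi_rpow_of_lt hq hR
      _ = ENNReal.ofReal (C₁ / (n / θ - a - 1) * r ^ ((1 + a) * θ - n)) := by
          rw [← ENNReal.ofReal_mul hC₁]
          congr 1
          have h1 : -(r ^ θ) ^ (a - n / θ + 1) / (a - n / θ + 1)
              = (r ^ θ) ^ (a - n / θ + 1) / (n / θ - a - 1) := by
            rw [show a - n / θ + 1 = -(n / θ - a - 1) by ring]
            rw [neg_div, div_neg, neg_neg]
          rw [h1, ← Real.rpow_mul hr.le]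
          rw [show θ * (a - n / θ + 1) = (1 + a) * θ - n by field_simp; ring]
          ring
  calc (∫⁻ τ in Ioc (0:ℝ) (r ^ θ),
        ENNReal.ofReal (C₁ * min (τ ^ (-n / θ)) (τ * r ^ (-n - θ)) * τ ^ a)) +
      (∫⁻ τ in Ioi (r ^ θ),
        ENNReal.ofReal (C₁ * min (τ ^ (-n / θ)) (τ * r ^ (-n - θ)) * τ ^ a))
      ≤ ENNReal.ofReal (C₁ / (2 + a) * r ^ ((1 + a) * θ - n)) +
        ENNReal.ofReal (C₁ / (n / θ - a - 1) * r ^ ((1 + a) * θ - n)) := add_le_add hp1 hp2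
    _ = ENNReal.ofReal ((C₁ * (1 / (2 + a) + 1 / (n / θ - a - 1))) * r ^ ((1 + a) * θ - n)) := by
        rw [← ENNReal.ofReal_add (by positivity)
          (mul_nonneg (div_nonneg hC₁ hden.le) (rpow_nonneg hr.le _))]
        congr 1
        field_simp

theorem volume_potential_estimate (N : ℕ) (hN : 1 ≤ N) (θ a b C₁ : ℝ)
    (hθ : 0 < θ) (hθ2 : θ ≤ 2) (ha : 0 ≤ a) (hb : b < N) (hab : (1 + a) * θ < b)
    (hC₁ : 0 < C₁)
    (G : EuclideanSpace ℝ (Fin N) → ℝ → ℝ)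
    (hG0 : ∀ x t, 0 < t → 0 ≤ G x t)
    (hG : ∀ x t, 0 < t →
      G x t ≤ C₁ * t ^ (-(N : ℝ) / θ) * (1 + t ^ (-1 / θ) * ‖x‖) ^ (-(N : ℝ) - θ)) :
    ∃ C > 0, ∀ x : EuclideanSpace ℝ (Fin N), x ≠ 0 → ∀ t > 0,
      (∫⁻ s in Ioo 0 t, ∫⁻ y,
          ENNReal.ofReal (G (x - y) (t - s) * (t - s) ^ a * ‖y‖ ^ (-b)))
        ≤ ENNReal.ofReal (C * ‖x‖ ^ ((1 + a) * θ - b)) := by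
  have hα : 0 < (1 + a) * θ := mul_pos (by linarith) hθ
  have hNθ : (1 + a) * θ < (N : ℝ) := lt_trans hab hb
  haveI := nontrivialE N hN
  obtain ⟨KB, hKBtop, hKB⟩ := riesz_bound N hN ((1 + a) * θ) b hα hab hb
  set c₂ : ℝ := C₁ * (1 / (2 + a) + 1 / ((N : ℝ) / θ - a - 1)) with hc₂def
  have hden : 0 < (N : ℝ) / θ - a - 1 := by
    have h1 : a + 1 < (N : ℝ) / θ := (lt_div_iff₀ hθ).2 (by nlinarith)
    linarith
  have hc₂ : 0 ≤ c₂ := by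
    apply mul_nonneg hC₁.le
    exact add_nonneg (div_nonneg zero_le_one (by linarith)) (div_nonneg zero_le_one hden.le)
  refine ⟨(ENNReal.ofReal c₂ * KB).toReal + 1,
    by positivity, ?_⟩
  intro x hx t ht
  have hae : ∀ᵐ (y : EuclideanSpace ℝ (Fin N)) ∂volume, y ≠ x := by
    rw [ae_iff]
    have hset : {y : EuclideanSpace ℝ (Fin N) | ¬ y ≠ x} = {x} := by ext y; simp
    rw [hset]
    exact measure_singleton x
  set F : ℝ → EuclideanSpace ℝ (Fin N) → ℝ≥0∞ := fun s y =>
    ENNReal.ofReal (C₁ * min ((t - s) ^ (-(N:ℝ) / θ))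
      ((t - s) * ‖x - y‖ ^ (-(N:ℝ) - θ)) * (t - s) ^ a) *
      ENNReal.ofReal (‖y‖ ^ (-b)) with hFdef
  have step1 : (∫⁻ s in Ioo 0 t, ∫⁻ y,
      ENNReal.ofReal (G (x - y) (t - s) * (t - s) ^ a * ‖y‖ ^ (-b)))
      ≤ ∫⁻ s in Ioo 0 t, ∫⁻ y, F s y := by
    apply setLIntegral_mono' measurableSet_Ioo
    intro s hs
    have hts : 0 < t - s := sub_pos.2 hs.2
    apply lintegral_mono_ae
    filter_upwards [hae] with y hy
    have hxy : 0 < ‖x - y‖ := norm_pos_iff.2 (sub_ne_zero.2 (Ne.symm hy))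
    have hGb : G (x - y) (t - s) ≤ C₁ * min ((t - s) ^ (-(N:ℝ) / θ))
        ((t - s) * ‖x - y‖ ^ (-(N:ℝ) - θ)) := by
      refine (hG (x - y) (t - s) hts).trans ?_
      rw [mul_assoc]
      exact mul_le_mul_of_nonneg_left
        (kernel_min_bound (N:ℝ) θ (Nat.cast_nonneg N) hθ hts hxy) hC₁.le
    have hmin_nn : 0 ≤ C₁ * min ((t - s) ^ (-(N:ℝ) / θ))
        ((t - s) * ‖x - y‖ ^ (-(N:ℝ) - θ)) * (t - s) ^ a :=
      mul_nonneg (mul_nonneg hC₁.le (le_min (rpow_nonneg hts.le _)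
        (mul_nonneg hts.le (rpow_nonneg hxy.le _)))) (rpow_nonneg hts.le _)
    rw [hFdef]
    dsimp only
    rw [← ENNReal.ofReal_mul hmin_nn]
    apply ENNReal.ofReal_le_ofReal
    apply mul_le_mul_of_nonneg_right _ (rpow_nonneg (norm_nonneg _) _)
    exact mul_le_mul_of_nonneg_right hGb (rpow_nonneg hts.le _)
  have hFm : Measurable (fun p : ℝ × EuclideanSpace ℝ (Fin N) => F p.1 p.2) := by
    simp only [hFdef]
    have h1 : Measurable fun p : ℝ × EuclideanSpace ℝ (Fin N) => t - p.1 :=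
      measurable_const.sub measurable_fst
    have h2 : Measurable fun p : ℝ × EuclideanSpace ℝ (Fin N) => ‖x - p.2‖ :=
      (measurable_const.sub measurable_snd).norm
    exact (((measurable_const.mul ((h1.pow measurable_const).min
      (h1.mul (h2.pow measurable_const)))).mul (h1.pow measurable_const)).ennreal_ofReal).mul
      ((measurable_snd.norm.pow measurable_const).ennreal_ofReal)
  have step2 : (∫⁻ s in Ioo 0 t, ∫⁻ y, F s y) = ∫⁻ y, ∫⁻ s in Ioo 0 t, F s y :=
    lintegral_lintegral_swap hFm.aemeasurable
  have hsubmap : ∀ g : ℝ → ℝ≥0∞, (∫⁻ s in Ioo 0 t, g (t - s)) = ∫⁻ τ in Ioo 0 t, g τ := by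
    intro g
    have hpre : (fun s : ℝ => t - s) ⁻¹' (Ioo 0 t) = Ioo 0 t := by
      ext s
      simp only [mem_preimage, mem_Ioo]
      constructor <;> rintro ⟨h1, h2⟩ <;> exact ⟨by linarith, by linarith⟩
    have hemb : MeasurableEmbedding (fun s : ℝ => t - s) :=
      (MeasurableEquiv.subLeft t).measurableEmbedding
    have := (Measure.measurePreserving_sub_left (volume : Measure ℝ) t).setLIntegral_comp_preimage_emb
      hemb g (Ioo 0 t)
    rwa [hpre] at this
  have key : ∀ᵐ (y : EuclideanSpace ℝ (Fin N)) ∂volume,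
      (∫⁻ s in Ioo 0 t, F s y) ≤
        ENNReal.ofReal c₂ *
          ENNReal.ofReal (‖x - y‖ ^ ((1 + a) * θ - N) * ‖y‖ ^ (-b)) := by
    filter_upwards [hae] with y hy
    have hxy : 0 < ‖x - y‖ := norm_pos_iff.2 (sub_ne_zero.2 (Ne.symm hy))
    have hsub2 : (∫⁻ s in Ioo 0 t, ENNReal.ofReal (C₁ * min ((t - s) ^ (-(N:ℝ) / θ))
          ((t - s) * ‖x - y‖ ^ (-(N:ℝ) - θ)) * (t - s) ^ a))
        = ∫⁻ τ in Ioo 0 t, ENNReal.ofReal (C₁ * min (τ ^ (-(N:ℝ) / θ))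
          (τ * ‖x - y‖ ^ (-(N:ℝ) - θ)) * τ ^ a) :=
      hsubmap (fun τ => ENNReal.ofReal (C₁ * min (τ ^ (-(N:ℝ) / θ))
        (τ * ‖x - y‖ ^ (-(N:ℝ) - θ)) * τ ^ a))
    calc ∫⁻ s in Ioo 0 t, F s y
        = (∫⁻ s in Ioo 0 t, ENNReal.ofReal (C₁ * min ((t - s) ^ (-(N:ℝ) / θ))
            ((t - s) * ‖x - y‖ ^ (-(N:ℝ) - θ)) * (t - s) ^ a)) *
            ENNReal.ofReal (‖y‖ ^ (-b)) := by
          rw [hFdef]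
          exact lintegral_mul_const' _ _ ENNReal.ofReal_ne_top
      _ = (∫⁻ τ in Ioo 0 t, ENNReal.ofReal (C₁ * min (τ ^ (-(N:ℝ) / θ))
            (τ * ‖x - y‖ ^ (-(N:ℝ) - θ)) * τ ^ a)) * ENNReal.ofReal (‖y‖ ^ (-b)) := by
          rw [hsub2]
      _ ≤ (∫⁻ τ in Ioi (0:ℝ), ENNReal.ofReal (C₁ * min (τ ^ (-(N:ℝ) / θ))
            (τ * ‖x - y‖ ^ (-(N:ℝ) - θ)) * τ ^ a)) * ENNReal.ofReal (‖y‖ ^ (-b)) :=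
          mul_le_mul_left (lintegral_mono_set Ioo_subset_Ioi_self) _
      _ ≤ ENNReal.ofReal (c₂ * ‖x - y‖ ^ ((1 + a) * θ - N)) * ENNReal.ofReal (‖y‖ ^ (-b)) :=
          mul_le_mul_left (time_bound (N:ℝ) θ a C₁ hθ ha hNθ hC₁.le hxy) _
      _ = ENNReal.ofReal c₂ *
            ENNReal.ofReal (‖x - y‖ ^ ((1 + a) * θ - N) * ‖y‖ ^ (-b)) := by
          rw [ENNReal.ofReal_mul hc₂, mul_assoc,
            ← ENNReal.ofReal_mul (rpow_nonneg hxy.le _)]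
  calc (∫⁻ s in Ioo 0 t, ∫⁻ y,
        ENNReal.ofReal (G (x - y) (t - s) * (t - s) ^ a * ‖y‖ ^ (-b)))
      ≤ ∫⁻ s in Ioo 0 t, ∫⁻ y, F s y := step1
    _ = ∫⁻ y, ∫⁻ s in Ioo 0 t, F s y := step2
    _ ≤ ∫⁻ y, ENNReal.ofReal c₂ *
          ENNReal.ofReal (‖x - y‖ ^ ((1 + a) * θ - N) * ‖y‖ ^ (-b)) :=
        lintegral_mono_ae key
    _ = ENNReal.ofReal c₂ *
          ∫⁻ y, ENNReal.ofReal (‖x - y‖ ^ ((1 + a) * θ - N) * ‖y‖ ^ (-b)) :=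
        lintegral_const_mul' _ _ ENNReal.ofReal_ne_top
    _ ≤ ENNReal.ofReal c₂ * (KB * ENNReal.ofReal (‖x‖ ^ ((1 + a) * θ - b))) :=
        mul_le_mul_right (hKB x hx) _
    _ ≤ ENNReal.ofReal (((ENNReal.ofReal c₂ * KB).toReal + 1) * ‖x‖ ^ ((1 + a) * θ - b)) := by
        have hne : ENNReal.ofReal c₂ * KB ≠ ⊤ :=
          ENNReal.mul_ne_top ENNReal.ofReal_ne_top hKBtop
        rw [ENNReal.ofReal_mul (add_nonneg ENNReal.toReal_nonneg zero_le_one), ← mul_assoc]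
        apply mul_le_mul_left
        calc ENNReal.ofReal c₂ * KB
            = ENNReal.ofReal ((ENNReal.ofReal c₂ * KB).toReal) :=
            (ENNReal.ofReal_toReal hne).symm
          _ ≤ ENNReal.ofReal ((ENNReal.ofReal c₂ * KB).toReal + 1) :=
            ENNReal.ofReal_le_ofReal (by linarith)
end

section
/- Let $N\ge1$, $0<\theta\le2$, $0<a<N$ and $b\ge0$. There exist $C>0$ and $A>1$ such that, for every kernel $G(x,t)\le C_1 t^{-N/\theta}(1+t^{-1/\theta}|x|)^{-N-\theta}$ with $\int_{\mathbb{R}^N}G(x,t)dx\le 1$, one has for all $t>0$: $\sup_{x\in\mathbb{R}^N}\int_{\mathbb{R}^N} G(x-y,t)\,|y|^{-a}\Big[\log\Big(A+\tfrac1{|y|}\Big)\Big]^{-b}dy \le C\,t^{-a/\theta}\Big[\log\Big(A+\tfrac1t\Big)\Big]^{-b}$. -/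
open MeasureTheory Set Real
open scoped ENNReal

lemma aux_key (N : ℕ) (a ρ : ℝ) (hρ : 0 < ρ) (k : ℕ) :
    (ρ/2^(k+1) : ℝ)^(-a) * (ρ/2^k)^(N:ℝ) = ρ^((N:ℝ)-a) * 2^a * ((2:ℝ)^(a-(N:ℝ)))^k := by
  have h1 : (0:ℝ) < ρ/2^(k+1) := by positivity
  have h2 : (0:ℝ) < ρ/2^k := by positivity
  rw [Real.rpow_def_of_pos h1, Real.rpow_def_of_pos h2, Real.rpow_def_of_pos hρ,
    Real.rpow_def_of_pos two_pos, Real.rpow_def_of_pos two_pos, ← Real.exp_nat_mul,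
    Real.log_div hρ.ne' (by positivity), Real.log_div hρ.ne' (by positivity),
    Real.log_pow, Real.log_pow, ← Real.exp_add, ← Real.exp_add, ← Real.exp_add]
  congr 1
  push_cast
  ring

lemma aux_ball_lintegral (N : ℕ) (hN : 1 ≤ N) {a : ℝ} (ha0 : 0 < a) (haN : a < N) :
    ∃ K > 0, ∀ ρ : ℝ, 0 < ρ →
      (∫⁻ y in Metric.ball (0 : EuclideanSpace ℝ (Fin N)) ρ, ENNReal.ofReal (‖y‖ ^ (-a)))
        ≤ ENNReal.ofReal (K * ρ ^ ((N : ℝ) - a)) := by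
  haveI : Nontrivial (EuclideanSpace ℝ (Fin N)) := by
    have h : Module.finrank ℝ (EuclideanSpace ℝ (Fin N)) = N := finrank_euclideanSpace_fin
    exact Module.nontrivial_of_finrank_pos (R := ℝ)
      (by omega : 0 < Module.finrank ℝ (EuclideanSpace ℝ (Fin N)))
  set E := EuclideanSpace ℝ (Fin N)
  set V : ℝ≥0∞ := volume (Metric.ball (0 : E) 1) with hV
  have hVtop : V < ⊤ := measure_ball_lt_top
  set r : ℝ≥0∞ := ENNReal.ofReal (2 ^ (a - (N:ℝ))) with hr
  have hr1 : r < 1 := by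
    rw [hr, ← ENNReal.ofReal_one]
    exact ENNReal.ofReal_lt_ofReal_iff_of_nonneg (by positivity) |>.2
      (Real.rpow_lt_one_of_one_lt_of_neg one_lt_two (by linarith))
  set B : ℝ≥0∞ := ENNReal.ofReal (2 ^ a) * V * (1 - r)⁻¹ with hB
  have hBtop : B ≠ ⊤ := by
    apply ENNReal.mul_ne_top (ENNReal.mul_ne_top ENNReal.ofReal_ne_top hVtop.ne)
    simp [ENNReal.inv_ne_top, tsub_eq_zero_iff_le, not_le, hr1]
  refine ⟨B.toReal + 1, by positivity, fun ρ hρ => ?_⟩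
  set S : ℕ → Set E := fun k => {y : E | ρ/2^(k+1) ≤ ‖y‖} ∩ Metric.ball 0 (ρ/2^k) with hS
  -- covering
  have hcover : Metric.ball (0 : E) ρ ⊆ {0} ∪ ⋃ k, S k := by
    intro y hy
    rcases eq_or_ne y 0 with rfl | hy0
    · exact Or.inl rfl
    right
    have hny : 0 < ‖y‖ := norm_pos_iff.2 hy0
    have hyρ : ‖y‖ < ρ := by simpa using hy
    have hex : ∃ k : ℕ, ρ/2^(k+1) ≤ ‖y‖ := by
      obtain ⟨n, hn⟩ := exists_nat_ge (ρ/‖y‖)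
      refine ⟨n, ?_⟩
      have h2n : (ρ/‖y‖ : ℝ) ≤ 2^(n+1) := by
        calc (ρ/‖y‖ : ℝ) ≤ n := hn
        _ ≤ 2^(n+1) := by exact_mod_cast (Nat.lt_two_pow_self (n := n)).le.trans (Nat.pow_le_pow_right (by norm_num) (by omega))
      rw [div_le_iff₀ (by positivity)] at *
      nlinarith [hny, hρ]
    set k := Nat.find hex with hk
    have hk1 : ρ/2^(k+1) ≤ ‖y‖ := Nat.find_spec hex
    have hk2 : ‖y‖ < ρ/2^k := by
      rcases Nat.eq_zero_or_pos k with h0 | hpos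
      · simpa [h0] using hyρ
      · have := Nat.find_min hex (m := k - 1) (by omega)
        push_neg at this
        have hkk : k - 1 + 1 = k := by omega
        rwa [hkk] at this
    exact mem_iUnion.2 ⟨k, ⟨hk1, by simpa using hk2⟩⟩
  have hS_meas : ∀ k, MeasurableSet (S k) := fun k =>
    (measurableSet_le measurable_const measurable_norm).inter measurableSet_ball
  -- per-annulus bound
  have hterm : ∀ k : ℕ, (∫⁻ y in S k, ENNReal.ofReal (‖y‖ ^ (-a)))
      ≤ ENNReal.ofReal (ρ^((N:ℝ)-a) * 2^a * ((2:ℝ)^(a-(N:ℝ)))^k) * V := by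
    intro k
    have h1 : (0:ℝ) < ρ/2^(k+1) := by positivity
    have hbd : ∀ y ∈ S k, ENNReal.ofReal (‖y‖ ^ (-a)) ≤ ENNReal.ofReal ((ρ/2^(k+1))^(-a)) := by
      intro y hy
      exact ENNReal.ofReal_le_ofReal
        (Real.rpow_le_rpow_of_nonpos h1 hy.1 (by linarith))
    calc (∫⁻ y in S k, ENNReal.ofReal (‖y‖ ^ (-a)))
        ≤ ∫⁻ _ in S k, ENNReal.ofReal ((ρ/2^(k+1))^(-a)) := setLIntegral_mono' (hS_meas k) hbd
      _ = ENNReal.ofReal ((ρ/2^(k+1))^(-a)) * volume (S k) := setLIntegral_const _ _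
      _ ≤ ENNReal.ofReal ((ρ/2^(k+1))^(-a)) * (ENNReal.ofReal ((ρ/2^k) ^ Module.finrank ℝ E) * V) := by
          gcongr
          rw [← Measure.addHaar_ball (volume : Measure E) 0 (by positivity : (0:ℝ) ≤ ρ/2^k)]
          exact measure_mono inter_subset_right
      _ = ENNReal.ofReal ((ρ/2^(k+1))^(-a) * (ρ/2^k) ^ (N:ℝ)) * V := by
          rw [← mul_assoc, ← ENNReal.ofReal_mul (by positivity)]
          congr 3
          rw [finrank_euclideanSpace_fin, Real.rpow_natCast]
      _ = ENNReal.ofReal (ρ^((N:ℝ)-a) * 2^a * ((2:ℝ)^(a-(N:ℝ)))^k) * V := by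
          rw [aux_key N a ρ hρ k]
  -- put together
  calc (∫⁻ y in Metric.ball (0 : E) ρ, ENNReal.ofReal (‖y‖ ^ (-a)))
      ≤ ∫⁻ y in ({0} ∪ ⋃ k, S k : Set E), ENNReal.ofReal (‖y‖ ^ (-a)) :=
        lintegral_mono_set hcover
    _ ≤ (∫⁻ y in ({0} : Set E), ENNReal.ofReal (‖y‖ ^ (-a)))
        + ∫⁻ y in (⋃ k, S k), ENNReal.ofReal (‖y‖ ^ (-a)) := lintegral_union_le _ _ _
    _ ≤ 0 + ∑' k, ∫⁻ y in S k, ENNReal.ofReal (‖y‖ ^ (-a)) := by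
        gcongr
        · rw [setLIntegral_measure_zero _ _ (measure_singleton 0)]
        · exact lintegral_iUnion_le _ _
    _ ≤ ∑' k, ENNReal.ofReal (ρ^((N:ℝ)-a) * 2^a * ((2:ℝ)^(a-(N:ℝ)))^k) * V := by
        rw [zero_add]; exact ENNReal.tsum_le_tsum hterm
    _ = ENNReal.ofReal (ρ^((N:ℝ)-a)) * B := by
        rw [hB]
        have : ∀ k : ℕ, ENNReal.ofReal (ρ^((N:ℝ)-a) * 2^a * ((2:ℝ)^(a-(N:ℝ)))^k) * V
            = (ENNReal.ofReal (ρ^((N:ℝ)-a)) * ENNReal.ofReal (2^a) * V) * r ^ k := by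
          intro k
          rw [ENNReal.ofReal_mul (by positivity), ENNReal.ofReal_mul (by positivity),
            ENNReal.ofReal_pow (by positivity), hr]
          ring
        simp_rw [this]
        rw [ENNReal.tsum_mul_left, ENNReal.tsum_geometric]
        ring
    _ ≤ ENNReal.ofReal (ρ^((N:ℝ)-a)) * ENNReal.ofReal (B.toReal + 1) := by
        have hble : B ≤ ENNReal.ofReal (B.toReal + 1) := by
          conv_lhs => rw [← ENNReal.ofReal_toReal hBtop]
          exact ENNReal.ofReal_le_ofReal (by linarith [ENNReal.toReal_nonneg (a := B)])
        exact mul_le_mul_right hble _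
    _ = ENNReal.ofReal ((B.toReal + 1) * ρ ^ ((N : ℝ) - a)) := by
        rw [← ENNReal.ofReal_mul (by positivity), mul_comm]

-- monotone decay of the weight: for 0 < ρ ≤ s, s^(-a) L(s)^(-b) ≤ ρ^(-a) L(ρ)^(-b)
lemma aux_weight_mono {a b A : ℝ} (ha : 0 < a) (hb : 0 ≤ b) (hA2 : 2 ≤ A)
    (hbA : b ≤ a * Real.log A) {ρ s : ℝ} (hρ : 0 < ρ) (hs : ρ ≤ s) :
    s^(-a) * (Real.log (A + 1/s))^(-b) ≤ ρ^(-a) * (Real.log (A + 1/ρ))^(-b) := by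
  have hs0 : 0 < s := lt_of_lt_of_le hρ hs
  have hlogA : 0 < Real.log A := Real.log_pos (by linarith)
  have h1s : (0:ℝ) < 1/s := by positivity
  have h1ρ : (0:ℝ) < 1/ρ := by positivity
  have hLs : Real.log A ≤ Real.log (A + 1/s) := Real.log_le_log (by linarith) (by linarith)
  have hLρpos : 0 < Real.log (A + 1/ρ) := lt_of_lt_of_le hlogA
    (Real.log_le_log (by linarith) (by linarith))
  have hLspos : 0 < Real.log (A + 1/s) := lt_of_lt_of_le hlogA hLs
  set u : ℝ := Real.log (s/ρ) with hu
  have hu0 : 0 ≤ u := Real.log_nonneg ((one_le_div hρ).2 hs)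
  -- L(ρ) ≤ L(s) + u
  have hLsum : Real.log (A + 1/ρ) ≤ Real.log (A + 1/s) + u := by
    have h1 : A + 1/ρ ≤ (s/ρ) * (A + 1/s) := by
      have hsρ : 1 ≤ s/ρ := (one_le_div hρ).2 hs
      have : (s/ρ) * (A + 1/s) = (s/ρ)*A + 1/ρ := by field_simp
      rw [this]
      nlinarith
    calc Real.log (A + 1/ρ) ≤ Real.log ((s/ρ) * (A + 1/s)) :=
          Real.log_le_log (by positivity) h1
      _ = u + Real.log (A + 1/s) := Real.log_mul (by positivity) (by positivity)
      _ = Real.log (A + 1/s) + u := by ring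
  -- key: ρ^a L(ρ)^b ≤ s^a L(s)^b
  have hkey : ρ^a * (Real.log (A + 1/ρ))^b ≤ s^a * (Real.log (A + 1/s))^b := by
    have step1 : (Real.log (A + 1/ρ))^b ≤ (Real.log (A + 1/s) + u)^b :=
      Real.rpow_le_rpow hLρpos.le hLsum hb
    have step2 : (Real.log (A + 1/s) + u)^b ≤ (Real.log (A + 1/s))^b * (s/ρ)^a := by
      have hfac : Real.log (A + 1/s) + u = Real.log (A + 1/s) * (1 + u / Real.log (A + 1/s)) := by
        rw [mul_add, mul_one, mul_div_cancel₀ _ hLspos.ne']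
      rw [hfac, Real.mul_rpow hLspos.le (by positivity)]
      apply mul_le_mul_of_nonneg_left _ (Real.rpow_nonneg hLspos.le b)
      calc (1 + u / Real.log (A + 1/s))^b ≤ (Real.exp (u / Real.log (A + 1/s)))^b := by
            apply Real.rpow_le_rpow (by positivity) _ hb
            have := Real.add_one_le_exp (u / Real.log (A + 1/s))
            linarith
        _ = Real.exp (u / Real.log (A + 1/s) * b) := by
            rw [← Real.exp_log (x := (Real.exp (u / Real.log (A + 1/s)))^b)]
            · rw [Real.log_rpow (Real.exp_pos _), Real.log_exp]; ring_nf
            · positivity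
        _ ≤ Real.exp (u * a) := by
            apply Real.exp_le_exp.2
            rw [div_mul_eq_mul_div, div_le_iff₀ hLspos]
            calc u * b ≤ u * (a * Real.log A) := by nlinarith
              _ ≤ u * a * Real.log (A + 1/s) := by
                  rw [mul_assoc]
                  exact mul_le_mul_of_nonneg_left (by nlinarith) hu0
        _ = (s/ρ)^a := by
            rw [Real.rpow_def_of_pos (by positivity), Real.log_div hs0.ne' hρ.ne']
            rw [hu, Real.log_div hs0.ne' hρ.ne']
    calc ρ^a * (Real.log (A + 1/ρ))^b ≤ ρ^a * ((Real.log (A + 1/s))^b * (s/ρ)^a) := by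
          have := step1.trans step2
          exact mul_le_mul_of_nonneg_left this (by positivity)
      _ = (ρ * (s/ρ))^a * (Real.log (A + 1/s))^b := by
          rw [Real.mul_rpow hρ.le (by positivity)]; ring
      _ = s^a * (Real.log (A + 1/s))^b := by rw [mul_div_cancel₀ _ hρ.ne']
  -- invert
  have hpos1 : 0 < ρ^a * (Real.log (A + 1/ρ))^b := by positivity
  have hpos2 : 0 < s^a * (Real.log (A + 1/s))^b := by positivity
  rw [Real.rpow_neg hs0.le, Real.rpow_neg hLspos.le, Real.rpow_neg hρ.le,
    Real.rpow_neg hLρpos.le, ← mul_inv, ← mul_inv]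
  exact inv_anti₀ hpos1 hkey

lemma aux_log {A θ : ℝ} (hA2 : 2 ≤ A) (hθ : 0 < θ) (hθ2 : θ ≤ 2) :
    ∃ M > 0, ∀ b : ℝ, 0 ≤ b → ∀ t : ℝ, 0 < t →
      (Real.log (A + 1/(t^(1/θ))))^(-b) ≤ M^b * (Real.log (A + 1/t))^(-b) := by
  have hlogA : 0 < Real.log A := Real.log_pos (by linarith)
  have hLA1 : 0 < Real.log (A+1) := Real.log_pos (by linarith)
  have hMpos : 0 < 2 + Real.log (A+1) / Real.log A := by
    have := div_pos hLA1 hlogA; linarith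
  refine ⟨2 + Real.log (A+1) / Real.log A, hMpos, fun b hb t ht => ?_⟩
  set M : ℝ := 2 + Real.log (A+1) / Real.log A with hM
  set x : ℝ := t ^ (-1/θ) with hx
  have hx0 : 0 < x := Real.rpow_pos_of_pos ht _
  have hρx : 1/(t^(1/θ)) = x := by
    rw [one_div, ← Real.rpow_neg ht.le, hx]; ring_nf
  have h1t : (0:ℝ) < 1/t := by positivity
  have hLt : 0 < Real.log (A + 1/t) := Real.log_pos (by linarith)
  have hLx : 0 < Real.log (A + x) := Real.log_pos (by linarith)
  -- main comparison
  have hcomp : Real.log (A + 1/t) ≤ M * Real.log (A + x) := by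
    rcases le_or_gt t 1 with ht1 | ht1
    · have hx1 : 1 ≤ x := Real.one_le_rpow_of_pos_of_le_one_of_nonpos ht ht1
        (by rw [neg_div]; simp [le_of_lt, div_nonneg, hθ.le])
      have hxθ : x ^ θ = 1/t := by
        rw [hx, ← Real.rpow_mul ht.le]
        have hm : (-1/θ)*θ = -1 := by field_simp
        rw [hm, Real.rpow_neg_one, one_div]
      have hxx : x ^ θ ≤ x ^ (2:ℝ) := Real.rpow_le_rpow_of_exponent_le hx1 hθ2
      have hx2 : x ^ (2:ℝ) = x^(2:ℕ) := by
        rw [← Real.rpow_natCast x 2]; norm_num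
      have hsq : A + 1/t ≤ (A + x)^(2:ℕ) := by
        have h2 : x^(2:ℝ) ≤ (A+x)^(2:ℕ) - A := by
          rw [hx2]; ring_nf; nlinarith
        rw [← hxθ]
        linarith [hxx]
      calc Real.log (A + 1/t) ≤ Real.log ((A + x)^(2:ℕ)) :=
            Real.log_le_log (by linarith) hsq
        _ = 2 * Real.log (A + x) := by rw [Real.log_pow]; norm_num
        _ ≤ M * Real.log (A + x) := by
            apply mul_le_mul_of_nonneg_right _ hLx.le
            have := div_pos hLA1 hlogA
            rw [hM]; linarith
    · have h1t1 : 1/t ≤ 1 := by rw [div_le_one ht]; linarith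
      calc Real.log (A + 1/t) ≤ Real.log (A + 1) := Real.log_le_log (by linarith) (by linarith)
        _ = Real.log (A+1) / Real.log A * Real.log A := by field_simp
        _ ≤ Real.log (A+1) / Real.log A * Real.log (A + x) := by
            apply mul_le_mul_of_nonneg_left _ (div_pos hLA1 hlogA).le
            exact Real.log_le_log (by linarith) (by linarith)
        _ ≤ M * Real.log (A + x) := by
            apply mul_le_mul_of_nonneg_right _ hLx.le
            rw [hM]; linarith
  -- conclude
  rw [hρx, Real.rpow_neg hLx.le, Real.rpow_neg hLt.le]
  have hpow : Real.log (A + 1/t) ^ b ≤ M^b * Real.log (A + x) ^ b := by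
    rw [← Real.mul_rpow hMpos.le hLx.le]
    exact Real.rpow_le_rpow hLt.le hcomp hb
  have h2 : Real.log (A+1/t)^b / M^b ≤ Real.log (A+x)^b := by
    rw [div_le_iff₀ (Real.rpow_pos_of_pos hMpos b)]
    linarith [hpow]
  calc (Real.log (A + x)^b)⁻¹ ≤ (Real.log (A+1/t)^b / M^b)⁻¹ := by
        apply inv_anti₀ _ h2
        exact div_pos (Real.rpow_pos_of_pos hLt b) (Real.rpow_pos_of_pos hMpos b)
    _ = M^b * (Real.log (A + 1/t)^b)⁻¹ := by
        rw [inv_div, div_eq_mul_inv]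

theorem smoothing_log_weight (N : ℕ) (hN : 1 ≤ N) (θ a b C₁ : ℝ)
    (hθ : 0 < θ) (hθ2 : θ ≤ 2) (ha0 : 0 < a) (haN : a < N) (hb : 0 ≤ b) (hC₁ : 0 < C₁) :
    ∃ C > 0, ∃ A > 1, ∀ G : EuclideanSpace ℝ (Fin N) → ℝ → ℝ,
      (∀ (x : EuclideanSpace ℝ (Fin N)) (t : ℝ), 0 < t →
        G x t ≤ C₁ * t ^ (-(N : ℝ) / θ) * (1 + t ^ (-1 / θ) * ‖x‖) ^ (-(N : ℝ) - θ)) →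
      (∀ t : ℝ, 0 < t → (∫⁻ x, ENNReal.ofReal (G x t)) ≤ 1) →
      ∀ t : ℝ, 0 < t → ∀ x : EuclideanSpace ℝ (Fin N),
        (∫⁻ y, ENNReal.ofReal
            (G (x - y) t * ‖y‖ ^ (-a) * (Real.log (A + 1 / ‖y‖)) ^ (-b)))
          ≤ ENNReal.ofReal (C * t ^ (-a / θ) * (Real.log (A + 1 / t)) ^ (-b)) := by
  set E := EuclideanSpace ℝ (Fin N)
  -- choose A
  obtain ⟨A, hA2, hbA⟩ : ∃ A : ℝ, 2 ≤ A ∧ b ≤ a * Real.log A := by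
    refine ⟨1 + max 1 (Real.exp (b/a)), ?_, ?_⟩
    · have := le_max_left 1 (Real.exp (b/a)); linarith
    · have h1 : Real.exp (b/a) ≤ 1 + max 1 (Real.exp (b/a)) := by
        have := le_max_right 1 (Real.exp (b/a)); linarith
      have h2 : b/a ≤ Real.log (1 + max 1 (Real.exp (b/a))) := by
        have h3 := Real.log_le_log (Real.exp_pos (b/a)) h1
        rwa [Real.log_exp] at h3
      rw [div_le_iff₀ ha0] at h2
      linarith
  have hA1 : 1 < A := by linarith
  have hlogA : 0 < Real.log A := Real.log_pos hA1
  obtain ⟨K, hK0, hK⟩ := aux_ball_lintegral N hN ha0 haN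
  obtain ⟨M, hM0, hM⟩ := aux_log hA2 hθ hθ2
  have hMb : 0 < M^b := Real.rpow_pos_of_pos hM0 b
  refine ⟨(C₁*K + 1) * M^b, by positivity, A, hA1, fun G hG hmass t ht x => ?_⟩
  set ρ : ℝ := t ^ (1/θ) with hρdef
  have hρ0 : 0 < ρ := Real.rpow_pos_of_pos ht _
  have hLρ : 0 < Real.log (A + 1/ρ) := Real.log_pos (by
    have : (0:ℝ) < 1/ρ := by positivity
    linarith)
  have hLt : 0 < Real.log (A + 1/t) := Real.log_pos (by
    have : (0:ℝ) < 1/t := by positivity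
    linarith)
  set Lρb : ℝ := (Real.log (A + 1/ρ))^(-b) with hLρb
  have hLρb0 : 0 ≤ Lρb := Real.rpow_nonneg hLρ.le _
  set D : ℝ := C₁ * t^(-(N:ℝ)/θ) with hD
  have hD0 : 0 < D := by
    have := Real.rpow_pos_of_pos ht (-(N:ℝ)/θ); positivity
  -- rpow algebra
  have hρa : ρ^(-a) = t^(-a/θ) := by
    rw [hρdef, ← Real.rpow_mul ht.le]; congr 1; ring
  have hρN : t^(-(N:ℝ)/θ) * ρ^((N:ℝ)-a) = ρ^(-a) := by
    have h1 : t^(-(N:ℝ)/θ) = ρ^(-(N:ℝ)) := by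
      rw [hρdef, ← Real.rpow_mul ht.le]; congr 1; ring
    rw [h1, ← Real.rpow_add hρ0]; congr 1; ring
  -- pointwise bound of G
  have hGle : ∀ y : E, G (x - y) t ≤ D := by
    intro y
    have h1 : (1 + t ^ (-1/θ) * ‖x - y‖) ^ (-(N:ℝ) - θ) ≤ 1 := by
      apply Real.rpow_le_one_of_one_le_of_nonpos
      · have : 0 ≤ t ^ (-1/θ) * ‖x - y‖ := by positivity
        linarith
      · have : (0:ℝ) ≤ N := Nat.cast_nonneg N
        linarith
    calc G (x - y) t ≤ C₁ * t ^ (-(N:ℝ)/θ) * (1 + t ^ (-1/θ) * ‖x - y‖) ^ (-(N:ℝ) - θ) :=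
          hG (x - y) t ht
      _ ≤ C₁ * t ^ (-(N:ℝ)/θ) * 1 := by
          apply mul_le_mul_of_nonneg_left h1
          have := Real.rpow_pos_of_pos ht (-(N:ℝ)/θ); positivity
      _ = D := by rw [mul_one]
  -- the integrand
  set f : E → ℝ≥0∞ := fun y => ENNReal.ofReal
      (G (x - y) t * ‖y‖ ^ (-a) * (Real.log (A + 1 / ‖y‖)) ^ (-b)) with hf
  -- inner estimate
  have hinner : (∫⁻ y in Metric.ball (0:E) ρ, f y) ≤ ENNReal.ofReal (C₁ * K * (ρ^(-a) * Lρb)) := by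
    have hpt : ∀ y ∈ Metric.ball (0:E) ρ, f y ≤
        ENNReal.ofReal (D * Lρb) * ENNReal.ofReal (‖y‖^(-a)) := by
      intro y hy
      rcases eq_or_ne y 0 with rfl | hy0
      · have h0 : (0:ℝ)^(-a) = 0 := Real.zero_rpow (ne_of_lt (neg_lt_zero.2 ha0))
        rw [hf]; simp [h0]
      · have hny : 0 < ‖y‖ := norm_pos_iff.2 hy0
        have hyρ : ‖y‖ < ρ := by simpa using hy
        have hw1 : (0:ℝ) ≤ ‖y‖^(-a) := Real.rpow_nonneg (norm_nonneg y) _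
        have hw2 : (Real.log (A + 1/‖y‖))^(-b) ≤ Lρb := by
          rw [hLρb]
          apply Real.rpow_le_rpow_of_nonpos hLρ _ (by linarith)
          apply Real.log_le_log (by positivity)
          have : 1/ρ ≤ 1/‖y‖ := one_div_le_one_div_of_le hny hyρ.le
          linarith
        have hw2' : (0:ℝ) ≤ (Real.log (A + 1/‖y‖))^(-b) := by
          apply Real.rpow_nonneg
          have h1y : (0:ℝ) < 1/‖y‖ := by positivity
          have := Real.log_pos (show (1:ℝ) < A + 1/‖y‖ by linarith)
          linarith
        have hreal : G (x - y) t * ‖y‖ ^ (-a) * (Real.log (A + 1 / ‖y‖)) ^ (-b)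
            ≤ (D * Lρb) * ‖y‖^(-a) := by
          calc G (x - y) t * ‖y‖ ^ (-a) * (Real.log (A + 1 / ‖y‖)) ^ (-b)
              ≤ D * ‖y‖ ^ (-a) * (Real.log (A + 1 / ‖y‖)) ^ (-b) :=
                mul_le_mul_of_nonneg_right
                  (mul_le_mul_of_nonneg_right (hGle y) hw1) hw2'
            _ ≤ D * ‖y‖ ^ (-a) * Lρb :=
                mul_le_mul_of_nonneg_left hw2 (by positivity)
            _ = (D * Lρb) * ‖y‖^(-a) := by ring
        calc f y ≤ ENNReal.ofReal ((D * Lρb) * ‖y‖^(-a)) := ENNReal.ofReal_le_ofReal hreal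
          _ = ENNReal.ofReal (D * Lρb) * ENNReal.ofReal (‖y‖^(-a)) :=
              ENNReal.ofReal_mul (by positivity)
    calc (∫⁻ y in Metric.ball (0:E) ρ, f y)
        ≤ ∫⁻ y in Metric.ball (0:E) ρ,
            ENNReal.ofReal (D * Lρb) * ENNReal.ofReal (‖y‖^(-a)) :=
          setLIntegral_mono' measurableSet_ball hpt
      _ = ENNReal.ofReal (D * Lρb) * ∫⁻ y in Metric.ball (0:E) ρ, ENNReal.ofReal (‖y‖^(-a)) :=
          lintegral_const_mul' _ _ ENNReal.ofReal_ne_top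
      _ ≤ ENNReal.ofReal (D * Lρb) * ENNReal.ofReal (K * ρ^((N:ℝ)-a)) :=
          mul_le_mul_right (hK ρ hρ0) _
      _ = ENNReal.ofReal (C₁ * K * (ρ^(-a) * Lρb)) := by
          rw [← ENNReal.ofReal_mul (by positivity)]
          congr 1
          rw [← hρN, hD]
          ring
  -- outer estimate
  have houter : (∫⁻ y in (Metric.ball (0:E) ρ)ᶜ, f y) ≤ ENNReal.ofReal (ρ^(-a) * Lρb) := by
    have hpt : ∀ y ∈ (Metric.ball (0:E) ρ)ᶜ, f y ≤
        ENNReal.ofReal (ρ^(-a) * Lρb) * ENNReal.ofReal (G (x - y) t) := by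
      intro y hy
      have hyρ : ρ ≤ ‖y‖ := by
        have := hy
        rw [mem_compl_iff, Metric.mem_ball, dist_zero_right] at this
        linarith [not_lt.1 this]
      have hw12 : ‖y‖ ^ (-a) * (Real.log (A + 1 / ‖y‖)) ^ (-b) ≤ ρ^(-a) * Lρb := by
        rw [hLρb]
        exact aux_weight_mono ha0 hb hA2 hbA hρ0 hyρ
      have hw12' : (0:ℝ) ≤ ‖y‖ ^ (-a) * (Real.log (A + 1 / ‖y‖)) ^ (-b) := by
        apply mul_nonneg (Real.rpow_nonneg (norm_nonneg y) _)
        apply Real.rpow_nonneg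
        have hny : 0 < ‖y‖ := lt_of_lt_of_le hρ0 hyρ
        have h1y : (0:ℝ) < 1/‖y‖ := by positivity
        have := Real.log_pos (show (1:ℝ) < A + 1/‖y‖ by linarith)
        linarith
      calc f y = ENNReal.ofReal (G (x - y) t *
              (‖y‖ ^ (-a) * (Real.log (A + 1 / ‖y‖)) ^ (-b))) := by
            simp only [hf]; rw [mul_assoc]
        _ = ENNReal.ofReal (G (x - y) t) *
              ENNReal.ofReal (‖y‖ ^ (-a) * (Real.log (A + 1 / ‖y‖)) ^ (-b)) :=
            ENNReal.ofReal_mul' hw12'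
        _ ≤ ENNReal.ofReal (G (x - y) t) * ENNReal.ofReal (ρ^(-a) * Lρb) :=
            mul_le_mul_right (ENNReal.ofReal_le_ofReal hw12) _
        _ = ENNReal.ofReal (ρ^(-a) * Lρb) * ENNReal.ofReal (G (x - y) t) := mul_comm _ _
    have hchange : (∫⁻ y, ENNReal.ofReal (G (x - y) t)) = ∫⁻ z, ENNReal.ofReal (G z t) := by
      have hmp : MeasurePreserving (fun y : E => x - y) volume volume :=
        Measure.measurePreserving_sub_left volume x
      exact (hmp.lintegral_map_equiv (fun z => ENNReal.ofReal (G z t))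
        (MeasurableEquiv.subLeft x)).symm
    calc (∫⁻ y in (Metric.ball (0:E) ρ)ᶜ, f y)
        ≤ ∫⁻ y in (Metric.ball (0:E) ρ)ᶜ,
            ENNReal.ofReal (ρ^(-a) * Lρb) * ENNReal.ofReal (G (x - y) t) :=
          setLIntegral_mono' measurableSet_ball.compl hpt
      _ = ENNReal.ofReal (ρ^(-a) * Lρb) *
            ∫⁻ y in (Metric.ball (0:E) ρ)ᶜ, ENNReal.ofReal (G (x - y) t) :=
          lintegral_const_mul' _ _ ENNReal.ofReal_ne_top
      _ ≤ ENNReal.ofReal (ρ^(-a) * Lρb) * ∫⁻ y, ENNReal.ofReal (G (x - y) t) :=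
          mul_le_mul_right (setLIntegral_le_lintegral _ _) _
      _ ≤ ENNReal.ofReal (ρ^(-a) * Lρb) * 1 := by
          rw [hchange]
          exact mul_le_mul_right (hmass t ht) _
      _ = ENNReal.ofReal (ρ^(-a) * Lρb) := mul_one _
  -- combine
  have hLρM : Lρb ≤ M^b * (Real.log (A + 1/t))^(-b) := hM b hb t ht
  calc (∫⁻ y, f y)
      = (∫⁻ y in Metric.ball (0:E) ρ, f y) + ∫⁻ y in (Metric.ball (0:E) ρ)ᶜ, f y :=
        (lintegral_add_compl f measurableSet_ball).symm
    _ ≤ ENNReal.ofReal (C₁ * K * (ρ^(-a) * Lρb)) + ENNReal.ofReal (ρ^(-a) * Lρb) :=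
        add_le_add hinner houter
    _ = ENNReal.ofReal ((C₁*K + 1) * (ρ^(-a) * Lρb)) := by
        rw [← ENNReal.ofReal_add (by positivity) (by positivity)]
        congr 1
        ring
    _ ≤ ENNReal.ofReal ((C₁*K + 1) * M^b * (t^(-a/θ) * (Real.log (A + 1/t))^(-b))) := by
        apply ENNReal.ofReal_le_ofReal
        rw [hρa]
        have h1 : t^(-a/θ) * Lρb ≤ t^(-a/θ) * (M^b * (Real.log (A + 1/t))^(-b)) :=
          mul_le_mul_of_nonneg_left hLρM (Real.rpow_nonneg ht.le _)
        have h2 := mul_le_mul_of_nonneg_left h1 (show (0:ℝ) ≤ C₁*K+1 by positivity)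
        calc (C₁*K + 1) * (t^(-a/θ) * Lρb)
            ≤ (C₁*K + 1) * (t^(-a/θ) * (M^b * (Real.log (A + 1/t))^(-b))) := h2
          _ = (C₁*K + 1) * M^b * (t^(-a/θ) * (Real.log (A + 1/t))^(-b)) := by ring
    _ = ENNReal.ofReal ((C₁*K + 1) * M^b * t^(-a/θ) * (Real.log (A + 1/t))^(-b)) := by
        congr 1
        ring
end

section
/- Let $N\ge1$, $0<\theta\le2$, $p>1$ and $T>0$. Suppose a nonnegative measurable function $u$ on $\mathbb{R}^N\times(0,T)$ and a nonnegative Radon measure $\mu$ satisfy, for a.e. $x$ and all $0<t<T$, the integral equation $u(x,t)=\int_0^t\int G(x-y,t-s)d\mu(y)ds+\int_0^t\int G(x-y,t-s)u(y,s)^p dy\,ds<\infty$, where $G$ is the fractional heat kernel with lower bound $G(x,t)\ge c\,t^{-N/\theta}(1+t^{-1/\theta}|x|)^{-N-\theta}$ ($0<\theta<2$). Then $u\in L^p_{loc}(\mathbb{R}^N\times[0,T))$. -/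
/-!
Fix `t₀ < t < T` and a point `x` at which the integral equation holds at time `t`. Since `u(x,t)`
is finite, so is `∫₀ᵗ ∫ G(x-y,t-s) u(y,s)^p dy ds`. For `s < t₀` and `|y| < R` the time `t - s`
stays in `[t - t₀, t]` and `|x - y| ≤ |x| + R`, where the lower bound of `G` is at least a positive
constant `ε`; hence `∫₀^{t₀} ∫_{B_R} u^p ≤ ε⁻¹ u(x,t) < ∞`.
-/

open MeasureTheory Set Real

section FracHeatBarrier

variable {E : Type*} [SeminormedAddCommGroup E]

noncomputable def fracHeatBarrier (n θ c : ℝ) (x : E) (t : ℝ) : ℝ :=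
  c * t ^ (-n / θ) * (1 + t ^ (-1 / θ) * ‖x‖) ^ (-n - θ)

theorem exists_pos_le_fracHeatBarrier {n θ c : ℝ} (hn : 0 ≤ n) (hθ : 0 < θ) (hc : 0 < c)
    {τ t ρ : ℝ} (hτ : 0 < τ) (hτt : τ ≤ t) (hρ : 0 ≤ ρ) :
    ∃ ε > 0, ∀ r ∈ Icc τ t, ∀ x : E, ‖x‖ ≤ ρ → ε ≤ fracHeatBarrier n θ c x r := by
  have ht : 0 < t := hτ.trans_le hτt
  refine ⟨c * t ^ (-n / θ) * (1 + τ ^ (-1 / θ) * ρ) ^ (-n - θ), by positivity, ?_⟩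
  rintro r ⟨hτr, hrt⟩ x hx
  have hr : 0 < r := hτ.trans_le hτr
  have htime : t ^ (-n / θ) ≤ r ^ (-n / θ) :=
    rpow_le_rpow_of_nonpos hr hrt (div_nonpos_of_nonpos_of_nonneg (by linarith) hθ.le)
  have hspace : (1 + τ ^ (-1 / θ) * ρ) ^ (-n - θ) ≤ (1 + r ^ (-1 / θ) * ‖x‖) ^ (-n - θ) := by
    have hscale : r ^ (-1 / θ) ≤ τ ^ (-1 / θ) :=
      rpow_le_rpow_of_nonpos hτ hτr (div_nonpos_of_nonpos_of_nonneg (by norm_num) hθ.le)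
    refine rpow_le_rpow_of_nonpos (by positivity) ?_ (by linarith)
    gcongr
  unfold fracHeatBarrier
  gcongr

end FracHeatBarrier

theorem setLIntegral_lt_top_of_kernel_lower_bound {α β : Type*} [MeasurableSpace α]
    [MeasurableSpace β] {ρ : Measure α} {ν : Measure β} {I J : Set α} {B : Set β}
    (hI : MeasurableSet I) (hB : MeasurableSet B) (hIJ : I ⊆ J) {K f : α → β → ℝ} {ε : ℝ}
    (hε : 0 < ε) (hK : ∀ s ∈ I, ∀ y ∈ B, ε ≤ K s y)
    (hfin : ∫⁻ s in J, ∫⁻ y, ENNReal.ofReal (K s y * f s y) ∂ν ∂ρ < ⊤) :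
    ∫⁻ s in I, ∫⁻ y in B, ENNReal.ofReal (f s y) ∂ν ∂ρ < ⊤ := by
  have hbound : ENNReal.ofReal ε * ∫⁻ s in I, ∫⁻ y in B, ENNReal.ofReal (f s y) ∂ν ∂ρ
      ≤ ∫⁻ s in J, ∫⁻ y, ENNReal.ofReal (K s y * f s y) ∂ν ∂ρ := by
    rw [← lintegral_const_mul' _ _ ENNReal.ofReal_ne_top]
    refine (setLIntegral_mono' hI fun s hs => ?_).trans (lintegral_mono_set hIJ)
    rw [← lintegral_const_mul' _ _ ENNReal.ofReal_ne_top]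
    refine (setLIntegral_mono' hB fun y hy => ?_).trans (setLIntegral_le_lintegral _ _)
    rw [ENNReal.ofReal_mul (hε.le.trans (hK s hs y hy))]
    gcongr
    exact hK s hs y hy
  exact ENNReal.lt_top_of_mul_ne_top_right (hbound.trans_lt hfin).ne (by simpa using hε)

theorem solution_locally_Lp_general (N : ℕ) (θ p T c : ℝ)
    (hθ0 : 0 < θ) (hc : 0 < c)
    (G : EuclideanSpace ℝ (Fin N) → ℝ → ℝ)
    (u : EuclideanSpace ℝ (Fin N) → ℝ → ℝ)
    (μ : Measure (EuclideanSpace ℝ (Fin N)))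
    (hGlow : ∀ (x : EuclideanSpace ℝ (Fin N)) (t : ℝ), 0 < t →
      c * t ^ (-(N : ℝ) / θ) * (1 + t ^ (-1 / θ) * ‖x‖) ^ (-(N : ℝ) - θ) ≤ G x t)
    (heq : ∀ t : ℝ, 0 < t → t < T → ∀ᵐ x : EuclideanSpace ℝ (Fin N),
      ENNReal.ofReal (u x t)
        = ∫⁻ s in Ioo 0 t,
            ((∫⁻ y, ENNReal.ofReal (G (x - y) (t - s)) ∂μ)
              + ∫⁻ y, ENNReal.ofReal (G (x - y) (t - s) * u y s ^ p))) :
    ∀ R : ℝ, 0 < R → ∀ t₀ : ℝ, 0 < t₀ → t₀ < T →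
      (∫⁻ t in Ioo 0 t₀,
          ∫⁻ x in Metric.ball (0 : EuclideanSpace ℝ (Fin N)) R,
            ENNReal.ofReal (u x t ^ p)) < ⊤ := by
  have hbarrier : ∀ x t, 0 < t → fracHeatBarrier (N : ℝ) θ c x t ≤ G x t := hGlow
  intro R hR t₀ ht₀ ht₀T
  obtain ⟨t, ht₀t, htT⟩ := exists_between ht₀T
  obtain ⟨x, hx⟩ := (heq t (ht₀.trans ht₀t) htT).exists
  have hfin : ∫⁻ s in Ioo 0 t, ∫⁻ y, ENNReal.ofReal (G (x - y) (t - s) * u y s ^ p) < ⊤ :=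
    calc _ ≤ ∫⁻ s in Ioo 0 t, ((∫⁻ y, ENNReal.ofReal (G (x - y) (t - s)) ∂μ)
              + ∫⁻ y, ENNReal.ofReal (G (x - y) (t - s) * u y s ^ p)) :=
          lintegral_mono fun s => le_add_self
      _ = ENNReal.ofReal (u x t) := hx.symm
      _ < ⊤ := ENNReal.ofReal_lt_top
  obtain ⟨ε, hε, hεG⟩ := exists_pos_le_fracHeatBarrier (E := EuclideanSpace ℝ (Fin N))
    (Nat.cast_nonneg N) hθ0 hc (sub_pos.2 ht₀t) (sub_le_self t ht₀.le)
    (add_nonneg (norm_nonneg x) hR.le)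
  refine setLIntegral_lt_top_of_kernel_lower_bound (K := fun s y => G (x - y) (t - s))
    (f := fun s y => u y s ^ p) measurableSet_Ioo measurableSet_ball
    (Ioo_subset_Ioo_right ht₀t.le) hε (fun s hs y hy => ?_) hfin
  have hxy : ‖x - y‖ ≤ ‖x‖ + R :=
    (norm_sub_le x y).trans (add_le_add_right (mem_ball_zero_iff.1 hy).le _)
  exact (hεG (t - s) ⟨by linarith [hs.2], by linarith [hs.1]⟩ _ hxy).trans
    (hbarrier _ _ (by linarith [hs.2]))

theorem solution_locally_Lp (N : ℕ) (hN : 1 ≤ N) (θ p T c : ℝ)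
    (hθ0 : 0 < θ) (hθ2 : θ < 2) (hp : 1 < p) (hT : 0 < T) (hc : 0 < c)
    (G : EuclideanSpace ℝ (Fin N) → ℝ → ℝ)
    (u : EuclideanSpace ℝ (Fin N) → ℝ → ℝ)
    (μ : Measure (EuclideanSpace ℝ (Fin N))) [IsFiniteMeasureOnCompacts μ]
    (hu : ∀ x t, 0 ≤ u x t)
    (hG0 : ∀ x t, 0 < t → 0 ≤ G x t)
    (hGlow : ∀ (x : EuclideanSpace ℝ (Fin N)) (t : ℝ), 0 < t →
      c * t ^ (-(N : ℝ) / θ) * (1 + t ^ (-1 / θ) * ‖x‖) ^ (-(N : ℝ) - θ) ≤ G x t)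
    (heq : ∀ t : ℝ, 0 < t → t < T → ∀ᵐ x : EuclideanSpace ℝ (Fin N),
      ENNReal.ofReal (u x t)
        = ∫⁻ s in Ioo 0 t,
            ((∫⁻ y, ENNReal.ofReal (G (x - y) (t - s)) ∂μ)
              + ∫⁻ y, ENNReal.ofReal (G (x - y) (t - s) * u y s ^ p))) :
    ∀ R : ℝ, 0 < R → ∀ t₀ : ℝ, 0 < t₀ → t₀ < T →
      (∫⁻ t in Ioo 0 t₀,
          ∫⁻ x in Metric.ball (0 : EuclideanSpace ℝ (Fin N)) R,
            ENNReal.ofReal (u x t ^ p)) < ⊤ :=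
  solution_locally_Lp_general N θ p T c hθ0 hc G u μ hGlow heq
end
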